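/- arXiv:1806.09065 — 8 statements merged into one kernel-verified Lean document; each statement's English description precedes it below -/
import Mathlib

section
/- For all integers n ≥ 0 and k ≥ 1, the number of set partitions of [n+1] avoiding classical k-crossings equals the sum over i from 0 to n of binomial(n,i) times the number of set partitions of [i] avoiding enhanced k-crossings. -/
/-- `(a, b)` is an arc of the set partition `π`: `a < b` lie in a common block
with no element of that block strictly between them. -/
def IsArc {s : Finset ℕ} (π : Finpartition s) (a b : ℕ) : Prop :=
  a < b ∧ ∃ B ∈ π.parts, a ∈ B ∧ b ∈ B ∧ ∀ x ∈ B, ¬(a < x ∧ x < b)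

/-- Enhanced (possibly trivial) arc: a genuine arc, or a trivial arc at a singleton block. -/
def IsEArc {s : Finset ℕ} (π : Finpartition s) (a b : ℕ) : Prop :=
  IsArc π a b ∨ (a = b ∧ {a} ∈ π.parts)

/-- `π` has an enhanced `k`-crossing: `a₁ < ⋯ < a_k ≤ b₁ < ⋯ < b_k` with each
`(aᵢ, bᵢ)` a (possibly trivial) arc. -/
def EnhCross {s : Finset ℕ} (π : Finpartition s) (k : ℕ) : Prop :=
  ∃ a b : Fin k → ℕ, StrictMono a ∧ StrictMono b ∧
    (∀ i j, a i ≤ b j) ∧ ∀ i, IsEArc π (a i) (b i)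

/-- `π` has a classical `k`-crossing: `a₁ < ⋯ < a_k < b₁ < ⋯ < b_k` with each
`(aᵢ, bᵢ)` an arc. -/
def ClCross {s : Finset ℕ} (π : Finpartition s) (k : ℕ) : Prop :=
  ∃ a b : Fin k → ℕ, StrictMono a ∧ StrictMono b ∧
    (∀ i j, a i < b j) ∧ ∀ i, IsArc π (a i) (b i)

/-- `π` has an enhanced `k`-nesting: `a₁ < ⋯ < a_k ≤ b_k < ⋯ < b₁` with each
`(aᵢ, bᵢ)` a (possibly trivial) arc. -/
def EnhNest {s : Finset ℕ} (π : Finpartition s) (k : ℕ) : Prop :=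
  ∃ a b : Fin k → ℕ, StrictMono a ∧ StrictAnti b ∧
    (∀ i j, a i ≤ b j) ∧ ∀ i, IsEArc π (a i) (b i)

/-- `π` has a classical `k`-nesting: additionally `a_k < b_k`. -/
def ClNest {s : Finset ℕ} (π : Finpartition s) (k : ℕ) : Prop :=
  ∃ a b : Fin k → ℕ, StrictMono a ∧ StrictAnti b ∧
    (∀ i j, a i < b j) ∧ ∀ i, IsArc π (a i) (b i)

/-- `σ = π̂`: the arcs of `σ` are exactly `(v, w+1)` for arcs `(v, w)` of `π`
together with `(u, u+1)` for singleton blocks `{u}` of `π`. -/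
def HatRel {s t : Finset ℕ} (π : Finpartition s) (σ : Finpartition t) : Prop :=
  ∀ x y, IsArc σ x y ↔
    ((∃ v w, IsArc π v w ∧ x = v ∧ y = w + 1) ∨ ({x} ∈ π.parts ∧ y = x + 1))

/-!
A partition is determined by its arcs, and every set of pairs `a < b` in which no two pairs share
a left end or a right end is the arc set of a partition: the one whose blocks are the chains of
pairs. Moving the right end of every arc of a partition of `[n + 1]` one step to the left gives a
set of pairs `a ≤ b` in `[n]`, again with distinct left and distinct right ends, and turns
classical `k`-crossings into enhanced ones. Such a set is the set of enhanced arcs (arcs, and loops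
`(a, a)` at singleton blocks) of exactly one partition of the set `T ⊆ [n]` of its ends. Grouping
by `T` and relabelling `T` order-preservingly as `[#T]` gives the binomial sum.
-/

open Finset Function

namespace ArcDiagram

structure IsArcSet (r : ℕ → ℕ → Prop) (E : Finset (ℕ × ℕ)) : Prop where
  rel : ∀ p ∈ E, r p.1 p.2
  injOn_fst : Set.InjOn Prod.fst (E : Set (ℕ × ℕ))
  injOn_snd : Set.InjOn Prod.snd (E : Set (ℕ × ℕ))

def support (E : Finset (ℕ × ℕ)) : Finset ℕ :=
  E.image Prod.fst ∪ E.image Prod.snd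

def HasCrossing (r : ℕ → ℕ → Prop) (E : Finset (ℕ × ℕ)) (k : ℕ) : Prop :=
  ∃ a b : Fin k → ℕ, StrictMono a ∧ StrictMono b ∧ (∀ i j, r (a i) (b j)) ∧ ∀ i, (a i, b i) ∈ E

open Classical in
noncomputable def crossingFree (r : ℕ → ℕ → Prop) (s : Finset ℕ) (k : ℕ) :
    Finset (Finset (ℕ × ℕ)) :=
  {E ∈ (s ×ˢ s).powerset | IsArcSet r E ∧ ¬HasCrossing r E k}

section ArcSet

variable {r : ℕ → ℕ → Prop} {E : Finset (ℕ × ℕ)} {s : Finset ℕ} {k x : ℕ}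

lemma mem_support : x ∈ support E ↔ ∃ p ∈ E, p.1 = x ∨ p.2 = x := by
  simp only [support, mem_union, mem_image]
  grind

lemma subset_product_iff_support_subset : E ⊆ s ×ˢ s ↔ support E ⊆ s := by
  simp only [support, subset_iff, mem_product, mem_union, mem_image]
  grind

lemma mem_crossingFree :
    E ∈ crossingFree r s k ↔ E ⊆ s ×ˢ s ∧ IsArcSet r E ∧ ¬HasCrossing r E k := by
  classical
  simp [crossingFree]

lemma IsArcSet.filter_lt (hE : IsArcSet (· ≤ ·) E) [DecidablePred fun p : ℕ × ℕ ↦ p.1 < p.2] :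
    IsArcSet (· < ·) {p ∈ E | p.1 < p.2} where
  rel _ hp := (mem_filter.1 hp).2
  injOn_fst := hE.injOn_fst.mono fun _ hp ↦ (mem_filter.1 hp).1
  injOn_snd := hE.injOn_snd.mono fun _ hp ↦ (mem_filter.1 hp).1

end ArcSet

section Image

variable {r r' : ℕ → ℕ → Prop} {E : Finset (ℕ × ℕ)} {f g : ℕ → ℕ} {k : ℕ}

lemma fst_mem_support {p : ℕ × ℕ} (hp : p ∈ E) : p.1 ∈ support E := mem_support.2 ⟨p, hp, .inl rfl⟩

lemma snd_mem_support {p : ℕ × ℕ} (hp : p ∈ E) : p.2 ∈ support E := mem_support.2 ⟨p, hp, .inr rfl⟩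

lemma support_image : support (E.image (Prod.map f f)) = (support E).image f := by
  simp only [support, image_union, image_image]
  rfl

lemma isArcSet_image_iff (hf : Set.InjOn f (support E)) (hg : Set.InjOn g (support E))
    (hr : ∀ x ∈ support E, ∀ y ∈ support E, r' (f x) (g y) ↔ r x y) :
    IsArcSet r' (E.image (Prod.map f g)) ↔ IsArcSet r E := by
  have hfst : ∀ p ∈ E, ∀ q ∈ E, f p.1 = f q.1 ↔ p.1 = q.1 := fun p hp q hq ↦
    hf.eq_iff (fst_mem_support hp) (fst_mem_support hq)
  have hsnd : ∀ p ∈ E, ∀ q ∈ E, g p.2 = g q.2 ↔ p.2 = q.2 := fun p hp q hq ↦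
    hg.eq_iff (snd_mem_support hp) (snd_mem_support hq)
  have hrel : ∀ p ∈ E, r' (f p.1) (g p.2) ↔ r p.1 p.2 := fun p hp ↦
    hr _ (fst_mem_support hp) _ (snd_mem_support hp)
  constructor
  · intro h
    refine ⟨fun p hp ↦ (hrel p hp).1 (h.rel _ (mem_image_of_mem _ hp)), fun p hp q hq hpq ↦ ?_,
      fun p hp q hq hpq ↦ ?_⟩
    · have := h.injOn_fst (mem_image_of_mem (Prod.map f g) hp) (mem_image_of_mem _ hq)
        (congr_arg f hpq)
      exact Prod.ext hpq ((hsnd p hp q hq).1 (congr_arg Prod.snd this))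
    · have := h.injOn_snd (mem_image_of_mem (Prod.map f g) hp) (mem_image_of_mem _ hq)
        (congr_arg g hpq)
      exact Prod.ext ((hfst p hp q hq).1 (congr_arg Prod.fst this)) hpq
  · intro h
    refine ⟨forall_mem_image.2 fun p hp ↦ (hrel p hp).2 (h.rel p hp), ?_, ?_⟩ <;>
      simp only [coe_image, Set.InjOn, Set.forall_mem_image, Prod.map_fst, Prod.map_snd] <;>
      intro p hp q hq hpq
    · rw [h.injOn_fst hp hq ((hfst p hp q hq).1 hpq)]
    · rw [h.injOn_snd hp hq ((hsnd p hp q hq).1 hpq)]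

lemma hasCrossing_image_iff (hf : StrictMonoOn f (support E)) (hg : StrictMonoOn g (support E))
    (hr : ∀ x ∈ support E, ∀ y ∈ support E, r' (f x) (g y) ↔ r x y) :
    HasCrossing r' (E.image (Prod.map f g)) k ↔ HasCrossing r E k := by
  constructor
  · rintro ⟨a', b', ha', hb', hab', hmem⟩
    choose p hp hpab using fun i ↦ mem_image.1 (hmem i)
    have hfa : ∀ i, f (p i).1 = a' i := fun i ↦ congr_arg Prod.fst (hpab i)
    have hgb : ∀ i, g (p i).2 = b' i := fun i ↦ congr_arg Prod.snd (hpab i)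
    refine ⟨fun i ↦ (p i).1, fun i ↦ (p i).2, fun i j hij ↦ ?_, fun i j hij ↦ ?_, fun i j ↦ ?_,
      fun i ↦ hp i⟩
    · exact (hf.lt_iff_lt (fst_mem_support (hp i)) (fst_mem_support (hp j))).1
        (by rw [hfa, hfa]; exact ha' hij)
    · exact (hg.lt_iff_lt (snd_mem_support (hp i)) (snd_mem_support (hp j))).1
        (by rw [hgb, hgb]; exact hb' hij)
    · exact (hr _ (fst_mem_support (hp i)) _ (snd_mem_support (hp j))).1
        (by rw [hfa, hgb]; exact hab' i j)
  · rintro ⟨a, b, ha, hb, hab, hmem⟩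
    refine ⟨f ∘ a, g ∘ b, fun i j hij ↦ ?_, fun i j hij ↦ ?_, fun i j ↦ ?_,
      fun i ↦ mem_image_of_mem (Prod.map f g) (hmem i)⟩
    · exact hf (fst_mem_support (hmem i)) (fst_mem_support (hmem j)) (ha hij)
    · exact hg (snd_mem_support (hmem i)) (snd_mem_support (hmem j)) (hb hij)
    · exact (hr _ (fst_mem_support (hmem i)) _ (snd_mem_support (hmem j))).2 (hab i j)

end Image

section Partition

variable {s : Finset ℕ} {π π' : Finpartition s} {P : Finset ℕ} {a b c x y : ℕ}

lemma IsArc.mem_left (h : IsArc π a b) : a ∈ s := by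
  obtain ⟨-, B, hB, ha, -⟩ := h
  exact π.le hB ha

lemma IsArc.mem_right (h : IsArc π a b) : b ∈ s := by
  obtain ⟨-, B, hB, -, hb, -⟩ := h
  exact π.le hB hb

lemma IsArc.right_unique (h : IsArc π a b) (h' : IsArc π a c) : b = c := by
  obtain ⟨hab, B, hB, haB, hbB, hB_gap⟩ := h
  obtain ⟨hac, C, hC, haC, hcC, hC_gap⟩ := h'
  obtain rfl := π.eq_of_mem_parts hB hC haB haC
  by_contra hbc
  rcases Nat.lt_or_gt_of_ne hbc with hbc | hbc
  exacts [hC_gap b hbB ⟨hab, hbc⟩, hB_gap c hcC ⟨hac, hbc⟩]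

lemma IsArc.left_unique (h : IsArc π a c) (h' : IsArc π b c) : a = b := by
  obtain ⟨hac, B, hB, haB, hcB, hB_gap⟩ := h
  obtain ⟨hbc, C, hC, hbC, hcC, hC_gap⟩ := h'
  obtain rfl := π.eq_of_mem_parts hB hC hcB hcC
  by_contra hab
  rcases Nat.lt_or_gt_of_ne hab with hab | hab
  exacts [hB_gap b hbC ⟨hab, hbc⟩, hC_gap a haB ⟨hab, hac⟩]

lemma exists_isArc_right (hP : P ∈ π.parts) (hx : x ∈ P) (hy : y ∈ P) (hxy : x < y) :
    ∃ z ∈ P, z ≤ y ∧ IsArc π x z := by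
  have hne : {w ∈ P | x < w}.Nonempty := ⟨y, mem_filter.2 ⟨hy, hxy⟩⟩
  obtain ⟨hzP, hxz⟩ := mem_filter.1 (min'_mem _ hne)
  refine ⟨_, hzP, min'_le _ _ (mem_filter.2 ⟨hy, hxy⟩), hxz, P, hP, hx, hzP, ?_⟩
  rintro w hw ⟨hxw, hwz⟩
  exact (min'_le _ w (mem_filter.2 ⟨hw, hxw⟩)).not_gt hwz

lemma exists_isArc_left (hP : P ∈ π.parts) (hx : x ∈ P) (hy : y ∈ P) (hxy : x < y) :
    ∃ z ∈ P, x ≤ z ∧ IsArc π z y := by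
  have hne : {w ∈ P | w < y}.Nonempty := ⟨x, mem_filter.2 ⟨hx, hxy⟩⟩
  obtain ⟨hzP, hzy⟩ := mem_filter.1 (max'_mem _ hne)
  refine ⟨_, hzP, le_max' _ _ (mem_filter.2 ⟨hx, hxy⟩), hzy, P, hP, hzP, hy, ?_⟩
  rintro w hw ⟨hzw, hwy⟩
  exact (le_max' _ w (mem_filter.2 ⟨hw, hwy⟩)).not_gt hzw

lemma mem_of_isArc_imp (h : ∀ a b, IsArc π a b → IsArc π' a b) {P' : Finset ℕ} {x y : ℕ}
    (hP : P ∈ π.parts) (hP' : P' ∈ π'.parts) (hx : x ∈ P) (hx' : x ∈ P') (hy : y ∈ P)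
    (hxy : x ≤ y) : y ∈ P' := by
  obtain rfl | hxy := hxy.eq_or_lt
  · exact hx'
  obtain ⟨z, hzP, hzy, hxz⟩ := exists_isArc_right hP hx hy hxy
  obtain ⟨-, Q, hQ, hxQ, hzQ, -⟩ := h x z hxz
  obtain rfl := π'.eq_of_mem_parts hQ hP' hxQ hx'
  exact mem_of_isArc_imp (x := z) h hP hQ hzP hzQ hy hzy
termination_by y - x
decreasing_by have := hxz.1; omega

lemma subset_of_isArc_imp (h : ∀ a b, IsArc π a b → IsArc π' a b) {P' : Finset ℕ}
    (hP : P ∈ π.parts) (hP' : P' ∈ π'.parts) (hx : x ∈ P) (hx' : x ∈ P') : P ⊆ P' := by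
  intro y hy
  rcases le_total x y with hxy | hyx
  · exact mem_of_isArc_imp h hP hP' hx hx' hy hxy
  · have hys : y ∈ s := π.le hP hy
    have hxQ := mem_of_isArc_imp h hP (π'.part_mem.2 hys) hy (π'.mem_part hys) hx hyx
    rw [← π'.eq_of_mem_parts (π'.part_mem.2 hys) hP' hxQ hx']
    exact π'.mem_part hys

theorem eq_of_isArc_iff (h : ∀ a b, IsArc π a b ↔ IsArc π' a b) : π = π' := by
  suffices key : ∀ {π π' : Finpartition s}, (∀ a b, IsArc π a b ↔ IsArc π' a b) →
      π.parts ⊆ π'.parts from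
    Finpartition.ext (Subset.antisymm (key h) (key fun a b ↦ (h a b).symm))
  intro π π' h P hP
  obtain ⟨x, hx⟩ := π.nonempty_of_mem_parts hP
  have hxs : x ∈ s := π.le hP hx
  have hQ := π'.part_mem.2 hxs
  have hxQ := π'.mem_part hxs
  rwa [Subset.antisymm (subset_of_isArc_imp (fun a b ↦ (h a b).1) hP hQ hx hxQ)
    (subset_of_isArc_imp (fun a b ↦ (h a b).2) hQ hP hxQ hx)]

end Partition

section OfArcSet

open Relation

variable {r : ℕ → ℕ → Prop} {A : Finset (ℕ × ℕ)} {s : Finset ℕ} {a b x y z : ℕ}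

def Reach (A : Finset (ℕ × ℕ)) : ℕ → ℕ → Prop :=
  ReflTransGen fun a b ↦ (a, b) ∈ A

lemma IsArcSet.le_of_reach (hA : IsArcSet (· < ·) A) (h : Reach A x y) : x ≤ y := by
  induction h with
  | refl => rfl
  | tail _ hyz ih => exact ih.trans (hA.rel _ hyz).le

lemma IsArcSet.reach_total_of_common_start (hA : IsArcSet r A) (hxy : Reach A x y)
    (hxz : Reach A x z) :
    Reach A y z ∨ Reach A z y :=
  ReflTransGen.total_of_right_unique
    (fun _ _ _ hab hac ↦ congr_arg Prod.snd (hA.injOn_fst hab hac rfl)) hxy hxz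

lemma IsArcSet.reach_total_of_common_end (hA : IsArcSet r A) (hxz : Reach A x z)
    (hyz : Reach A y z) :
    Reach A x y ∨ Reach A y x := by
  have := ReflTransGen.total_of_right_unique (r := swap fun a b ↦ (a, b) ∈ A)
    (fun _ _ _ hab hac ↦ congr_arg Prod.fst (hA.injOn_snd hab hac rfl))
    (reflTransGen_swap.2 hxz) (reflTransGen_swap.2 hyz)
  exact this.symm.imp reflTransGen_swap.1 reflTransGen_swap.1

def Linked (A : Finset (ℕ × ℕ)) (x y : ℕ) : Prop :=
  Reach A x y ∨ Reach A y x

lemma Linked.symm (h : Linked A x y) : Linked A y x := Or.symm h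

lemma IsArcSet.linked_trans (hA : IsArcSet r A) (hxy : Linked A x y) (hyz : Linked A y z) :
    Linked A x z := by
  rcases hxy with hxy | hyx <;> rcases hyz with hyz | hzy
  · exact .inl (hxy.trans hyz)
  · exact hA.reach_total_of_common_end hxy hzy
  · exact hA.reach_total_of_common_start hyx hyz
  · exact .inr (hzy.trans hyx)

open Classical in
noncomputable def block (s : Finset ℕ) (A : Finset (ℕ × ℕ)) (x : ℕ) : Finset ℕ :=
  {y ∈ s | Linked A x y}

lemma mem_block : y ∈ block s A x ↔ y ∈ s ∧ Linked A x y := by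
  classical
  simp [block]

lemma IsArcSet.block_eq (hA : IsArcSet r A) (h : Linked A x y) : block s A x = block s A y := by
  ext z
  simp only [mem_block]
  exact and_congr_right fun _ ↦ ⟨hA.linked_trans h.symm, hA.linked_trans h⟩

lemma mem_block_self (hx : x ∈ s) : x ∈ block s A x := mem_block.2 ⟨hx, .inl .refl⟩

noncomputable def ofArcSet (s : Finset ℕ) (A : Finset (ℕ × ℕ)) (hA : IsArcSet r A) :
    Finpartition s where
  parts := s.image (block s A)
  supIndep := by
    rw [supIndep_iff_pairwiseDisjoint]
    rintro _ hx _ hy hne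
    obtain ⟨x, -, rfl⟩ := mem_image.1 hx
    obtain ⟨y, -, rfl⟩ := mem_image.1 hy
    refine disjoint_left.2 fun z hzx hzy ↦ hne ?_
    rw [hA.block_eq (mem_block.1 hzx).2, hA.block_eq (mem_block.1 hzy).2]
  sup_parts := le_antisymm (Finset.sup_le fun _ h ↦ by
      obtain ⟨x, -, rfl⟩ := mem_image.1 h
      exact fun y hy ↦ (mem_block.1 hy).1)
    fun x hx ↦ mem_sup.2 ⟨_, mem_image_of_mem _ hx, mem_block_self hx⟩
  bot_notMem h := by
    obtain ⟨x, hx, hbot⟩ := mem_image.1 h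
    simpa [hbot] using mem_block_self (A := A) hx

theorem isArc_ofArcSet (hA : IsArcSet (· < ·) A) (hAs : A ⊆ s ×ˢ s) :
    IsArc (ofArcSet s A hA) a b ↔ (a, b) ∈ A := by
  constructor
  · rintro ⟨hab, B, hB, haB, hbB, hgap⟩
    obtain ⟨x, -, rfl⟩ := mem_image.1 hB
    have hlinked := hA.linked_trans (mem_block.1 haB).2.symm (mem_block.1 hbB).2
    have hreach : Reach A a b := hlinked.resolve_right fun h ↦ (hA.le_of_reach h).not_gt hab
    obtain rfl | ⟨c, hac, hcb⟩ := hreach.cases_head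
    · exact absurd hab (lt_irrefl a)
    have hcB : c ∈ block s A x := mem_block.2
      ⟨(mem_product.1 (hAs hac)).2, hA.linked_trans (mem_block.1 haB).2 (.inl (.single hac))⟩
    obtain rfl : c = b := (hA.le_of_reach hcb).eq_of_not_lt fun hcb ↦ hgap c hcB ⟨hA.rel _ hac, hcb⟩
    exact hac
  · intro hab
    have has := (mem_product.1 (hAs hab)).1
    refine ⟨hA.rel _ hab, block s A a, mem_image_of_mem _ has, mem_block_self has,
      mem_block.2 ⟨(mem_product.1 (hAs hab)).2, .inl (.single hab)⟩, ?_⟩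
    rintro c hc ⟨hac, hcb⟩
    rcases (mem_block.1 hc).2 with hreach | hreach
    · obtain rfl | ⟨d, had, hdc⟩ := hreach.cases_head
      · exact lt_irrefl a hac
      obtain rfl : d = b := congr_arg Prod.snd (hA.injOn_fst had hab rfl)
      exact (hA.le_of_reach hdc).not_gt hcb
    · exact (hA.le_of_reach hreach).not_gt hac

end OfArcSet

section Arcs

variable {s : Finset ℕ} {π : Finpartition s} {A E : Finset (ℕ × ℕ)} {p : ℕ × ℕ} {a b c k : ℕ}

open Classical in
noncomputable def arcs (π : Finpartition s) : Finset (ℕ × ℕ) :=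
  {p ∈ s ×ˢ s | IsArc π p.1 p.2}

open Classical in
noncomputable def earcs (π : Finpartition s) : Finset (ℕ × ℕ) :=
  {p ∈ s ×ˢ s | IsEArc π p.1 p.2}

lemma mem_arcs : p ∈ arcs π ↔ IsArc π p.1 p.2 := by
  classical
  simp only [arcs, mem_filter, mem_product, and_iff_right_iff_imp]
  exact fun h ↦ ⟨IsArc.mem_left h, IsArc.mem_right h⟩

lemma singleton_mem_parts_iff :
    {a} ∈ π.parts ↔ a ∈ s ∧ ∀ b, ¬IsArc π a b ∧ ¬IsArc π b a := by
  constructor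
  · intro ha
    refine ⟨π.le ha (mem_singleton_self a), fun b ↦ ⟨?_, ?_⟩⟩ <;>
      rintro ⟨hlt, B, hB, haB, hbB, -⟩ <;>
      obtain rfl := π.eq_of_mem_parts ha hB (mem_singleton_self _) ‹_› <;>
      simp_all
  · rintro ⟨has, hno⟩
    have hP := π.part_mem.2 has
    convert hP
    refine (eq_singleton_iff_unique_mem.2 ⟨π.mem_part has, fun y hy ↦ ?_⟩).symm
    by_contra hya
    rcases Nat.lt_or_gt_of_ne hya with hya | hay
    · obtain ⟨z, -, -, hza⟩ := exists_isArc_left hP hy (π.mem_part has) hya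
      exact (hno z).2 hza
    · obtain ⟨z, -, -, haz⟩ := exists_isArc_right hP (π.mem_part has) hy hay
      exact (hno z).1 haz

lemma IsEArc.mem_left (h : IsEArc π a b) : a ∈ s := by
  rcases h with h | ⟨-, h⟩
  exacts [IsArc.mem_left h, (singleton_mem_parts_iff.1 h).1]

lemma IsEArc.mem_right (h : IsEArc π a b) : b ∈ s := by
  rcases h with h | ⟨rfl, h⟩
  exacts [IsArc.mem_right h, (singleton_mem_parts_iff.1 h).1]

lemma IsEArc.right_unique (h : IsEArc π a b) (h' : IsEArc π a c) : b = c := by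
  rcases h with h | ⟨rfl, ha⟩ <;> rcases h' with h' | ⟨rfl, ha'⟩
  · exact IsArc.right_unique h h'
  · exact absurd h ((singleton_mem_parts_iff.1 ha').2 b).1
  · exact absurd h' ((singleton_mem_parts_iff.1 ha).2 c).1
  · rfl

lemma IsEArc.left_unique (h : IsEArc π a c) (h' : IsEArc π b c) : a = b := by
  rcases h with h | ⟨rfl, ha⟩ <;> rcases h' with h' | ⟨rfl, ha'⟩
  · exact IsArc.left_unique h h'
  · exact absurd h ((singleton_mem_parts_iff.1 ha').2 a).2
  · exact absurd h' ((singleton_mem_parts_iff.1 ha).2 b).2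
  · rfl

lemma mem_earcs : p ∈ earcs π ↔ IsEArc π p.1 p.2 := by
  classical
  simp only [earcs, mem_filter, mem_product, and_iff_right_iff_imp]
  exact fun h ↦ ⟨IsEArc.mem_left h, IsEArc.mem_right h⟩

lemma isArcSet_arcs : IsArcSet (· < ·) (arcs π) where
  rel _ hp := (mem_arcs.1 hp).1
  injOn_fst _ hp _ hq h := Prod.ext h (IsArc.right_unique (mem_arcs.1 hp) (h ▸ mem_arcs.1 hq))
  injOn_snd _ hp _ hq h := Prod.ext (IsArc.left_unique (mem_arcs.1 hp) (h ▸ mem_arcs.1 hq)) h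

lemma isArcSet_earcs : IsArcSet (· ≤ ·) (earcs π) where
  rel _ hp := (mem_earcs.1 hp).elim (fun h ↦ h.1.le) fun h ↦ h.1.le
  injOn_fst _ hp _ hq h := Prod.ext h (IsEArc.right_unique (mem_earcs.1 hp) (h ▸ mem_earcs.1 hq))
  injOn_snd _ hp _ hq h := Prod.ext (IsEArc.left_unique (mem_earcs.1 hp) (h ▸ mem_earcs.1 hq)) h

lemma arcs_subset : arcs π ⊆ s ×ˢ s := by
  classical
  exact filter_subset _ _

lemma support_earcs : support (earcs π) = s := by
  classical
  refine Subset.antisymm (subset_product_iff_support_subset.1 (filter_subset _ _)) fun x hx ↦ ?_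
  rw [mem_support]
  by_cases hsing : {x} ∈ π.parts
  · exact ⟨(x, x), mem_earcs.2 (.inr ⟨rfl, hsing⟩), .inl rfl⟩
  obtain ⟨b, hb⟩ : ∃ b, IsArc π x b ∨ IsArc π b x := by
    simpa [singleton_mem_parts_iff, hx, or_iff_not_imp_left] using hsing
  rcases hb with hb | hb
  exacts [⟨(x, b), mem_earcs.2 (.inl hb), .inl rfl⟩, ⟨(b, x), mem_earcs.2 (.inl hb), .inr rfl⟩]

lemma clCross_iff_hasCrossing : ClCross π k ↔ HasCrossing (· < ·) (arcs π) k := by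
  simp only [ClCross, HasCrossing, mem_arcs]

lemma enhCross_iff_hasCrossing : EnhCross π k ↔ HasCrossing (· ≤ ·) (earcs π) k := by
  simp only [EnhCross, HasCrossing, mem_earcs]

lemma arcs_injective : Injective (arcs : Finpartition s → Finset (ℕ × ℕ)) := fun π π' h ↦
  eq_of_isArc_iff fun a b ↦ by rw [← mem_arcs (p := (a, b)), h, mem_arcs]

lemma earcs_injective : Injective (earcs : Finpartition s → Finset (ℕ × ℕ)) := fun π π' h ↦
  eq_of_isArc_iff fun a b ↦ by
    have hiff : ∀ π : Finpartition s, IsArc π a b ↔ (a, b) ∈ earcs π ∧ a < b := fun π ↦ by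
      rw [mem_earcs]
      exact ⟨fun h ↦ ⟨.inl h, h.1⟩, fun ⟨h, hab⟩ ↦ h.resolve_right fun h ↦ hab.ne h.1⟩
    rw [hiff, hiff, h]

lemma exists_arcs_eq (hA : IsArcSet (· < ·) A) (hAs : A ⊆ s ×ˢ s) :
    ∃ π : Finpartition s, arcs π = A :=
  ⟨ofArcSet s A hA, ext fun _ ↦ by rw [mem_arcs, isArc_ofArcSet hA hAs]⟩

/-- The non-trivial arcs of `E` already determine the partition; the loops `(a, a)` of `E` are
then exactly its singleton blocks. -/
lemma exists_earcs_eq (hE : IsArcSet (· ≤ ·) E) (hEs : support E = s) :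
    ∃ π : Finpartition s, earcs π = E := by
  classical
  obtain ⟨π, hπ⟩ := exists_arcs_eq (s := s) hE.filter_lt (by
    rw [subset_product_iff_support_subset, ← hEs]
    exact union_subset_union (image_subset_image (filter_subset _ _))
      (image_subset_image (filter_subset _ _)))
  have harc : ∀ a b, IsArc π a b ↔ (a, b) ∈ E ∧ a < b := fun a b ↦ by
    rw [← mem_arcs (p := (a, b)), hπ, mem_filter]
  refine ⟨π, ext fun ⟨a, b⟩ ↦ ?_⟩
  rw [mem_earcs, IsEArc, harc, singleton_mem_parts_iff]
  simp only [harc, not_and, not_lt]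
  constructor
  · rintro (h | ⟨rfl, has, hno⟩)
    · exact h.1
    obtain ⟨⟨c, d⟩, hq, hca⟩ := mem_support.1 (hEs ▸ has)
    rcases hca with rfl | rfl
    · rwa [show d = c from ((hno d).1 hq).antisymm (hE.rel _ hq)] at hq
    · rwa [show c = d from (hE.rel _ hq).antisymm ((hno c).2 hq)] at hq
  · intro hab
    obtain hlt | rfl := (show a ≤ b from hE.rel _ hab).lt_or_eq
    · exact .inl ⟨hab, hlt⟩
    refine .inr ⟨rfl, hEs ▸ mem_support.2 ⟨_, hab, .inl rfl⟩, fun c ↦ ⟨fun hac ↦ ?_, fun hca ↦ ?_⟩⟩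
    · exact (congr_arg Prod.snd (hE.injOn_fst hab hac rfl)).ge
    · exact (congr_arg Prod.fst (hE.injOn_snd hab hca rfl)).le

end Arcs

section Counting

variable {r : ℕ → ℕ → Prop} {s t : Finset ℕ} {k : ℕ}

lemma card_subtype_eq_card_of_injective {α β : Type*} {P : α → Prop} {t : Finset β} {f : α → β}
    (hf : Injective f) (ht : ∀ b, b ∈ t ↔ ∃ a, P a ∧ f a = b) : Nat.card {a // P a} = #t := by
  rw [← Nat.card_eq_finsetCard]
  refine Nat.card_congr (Equiv.ofBijective (fun a ↦ ⟨f a, (ht _).2 ⟨a, a.2, rfl⟩⟩) ⟨?_, ?_⟩)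
  · exact fun a b h ↦ Subtype.ext (hf (congr_arg Subtype.val h))
  · rintro ⟨b, hb⟩
    obtain ⟨a, ha, rfl⟩ := (ht b).1 hb
    exact ⟨⟨a, ha⟩, rfl⟩

theorem card_not_clCross :
    Nat.card {π : Finpartition s // ¬ClCross π k} = #(crossingFree (· < ·) s k) := by
  refine card_subtype_eq_card_of_injective arcs_injective fun A ↦ ?_
  rw [mem_crossingFree]
  constructor
  · rintro ⟨hAs, hA, hcross⟩
    obtain ⟨π, rfl⟩ := exists_arcs_eq hA hAs
    exact ⟨π, by rwa [clCross_iff_hasCrossing], rfl⟩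
  · rintro ⟨π, hπ, rfl⟩
    exact ⟨arcs_subset, isArcSet_arcs, by rwa [← clCross_iff_hasCrossing]⟩

theorem card_not_enhCross :
    Nat.card {π : Finpartition s // ¬EnhCross π k} =
      #{E ∈ crossingFree (· ≤ ·) s k | support E = s} := by
  refine card_subtype_eq_card_of_injective earcs_injective fun E ↦ ?_
  rw [mem_filter, mem_crossingFree, subset_product_iff_support_subset]
  constructor
  · rintro ⟨⟨-, hE, hcross⟩, hEs⟩
    obtain ⟨π, rfl⟩ := exists_earcs_eq hE hEs
    exact ⟨π, by rwa [enhCross_iff_hasCrossing], rfl⟩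
  · rintro ⟨π, hπ, rfl⟩
    exact ⟨⟨support_earcs.le, isArcSet_earcs, by rwa [← enhCross_iff_hasCrossing]⟩, support_earcs⟩

/-- Classical arcs of `[n + 1]` are enhanced arcs of `[n]` with the right end moved one step
to the left. -/
theorem card_crossingFree_lt_succ (n : ℕ) :
    #(crossingFree (· < ·) (Icc 1 (n + 1)) k) = #(crossingFree (· ≤ ·) (Icc 1 n) k) := by
  have hr : ∀ x y : ℕ, id x < y + 1 ↔ x ≤ y := fun x y ↦ Nat.lt_succ_iff
  have hisArcSet (E : Finset (ℕ × ℕ)) :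
      IsArcSet (· < ·) (E.image (Prod.map id (· + 1))) ↔ IsArcSet (· ≤ ·) E :=
    isArcSet_image_iff injective_id.injOn (add_left_injective 1).injOn fun x _ y _ ↦ hr x y
  have hcross (E : Finset (ℕ × ℕ)) :
      HasCrossing (· < ·) (E.image (Prod.map id (· + 1))) k ↔ HasCrossing (· ≤ ·) E k :=
    hasCrossing_image_iff (strictMono_id.strictMonoOn _)
      ((strictMono_id.add_const 1).strictMonoOn _)
      fun x _ y _ ↦ hr x y
  rw [← card_image_of_injective (crossingFree (· ≤ ·) (Icc 1 n) k)
    (image_injective (injective_id.prodMap (add_left_injective 1)))]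
  congr 1
  ext A
  simp only [mem_image, mem_crossingFree]
  constructor
  · rintro ⟨hAs, hA, hnot⟩
    have hA' : (A.image (Prod.map id (· - 1))).image (Prod.map id (· + 1)) = A := by
      rw [image_image]
      refine (image_congr fun p hp ↦ ?_).trans image_id
      have := hA.rel p hp
      ext
      · rfl
      · simp only [comp_apply, Prod.map_snd, id_eq]
        omega
    refine ⟨_, ⟨?_, (hisArcSet _).1 (hA'.symm ▸ hA), fun h ↦ hnot (hA' ▸ (hcross _).2 h)⟩, hA'⟩
    intro q hq
    obtain ⟨p, hp, rfl⟩ := mem_image.1 hq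
    have := hA.rel p hp
    have := mem_product.1 (hAs hp)
    simp only [mem_product, mem_Icc, Prod.map_fst, Prod.map_snd, id_eq] at this ⊢
    omega
  · rintro ⟨E, ⟨hEs, hE, hnot⟩, rfl⟩
    refine ⟨fun q hq ↦ ?_, (hisArcSet E).2 hE, (hcross E).not.2 hnot⟩
    obtain ⟨p, hp, rfl⟩ := mem_image.1 hq
    have := mem_product.1 (hEs hp)
    simp only [mem_product, mem_Icc, Prod.map_fst, Prod.map_snd, id_eq] at this ⊢
    omega

theorem card_crossingFree_eq_sum (r : ℕ → ℕ → Prop) (s : Finset ℕ) (k : ℕ) :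
    #(crossingFree r s k) = ∑ t ∈ s.powerset, #{E ∈ crossingFree r t k | support E = t} := by
  rw [card_eq_sum_card_fiberwise (f := support) fun E hE ↦ mem_powerset.2
    (subset_product_iff_support_subset.1 (mem_crossingFree.1 hE).1)]
  refine sum_congr rfl fun t ht ↦ congr_arg card (ext fun E ↦ ?_)
  simp only [mem_filter, mem_crossingFree, subset_product_iff_support_subset]
  constructor
  · rintro ⟨⟨-, h⟩, rfl⟩
    exact ⟨⟨subset_rfl, h⟩, rfl⟩
  · rintro ⟨⟨-, h⟩, rfl⟩
    exact ⟨⟨mem_powerset.1 ht, h⟩, rfl⟩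

lemma exists_strictMonoOn_image_eq (h : #s = #t) :
    ∃ f : ℕ → ℕ, StrictMonoOn f s ∧ s.image f = t := by
  let e : s ≃o t := (s.orderIsoOfFin h).symm.trans (t.orderIsoOfFin rfl)
  refine ⟨fun x ↦ if hx : x ∈ s then e ⟨x, hx⟩ else 0, fun x hx y hy hxy ↦ ?_, ?_⟩
  · simp only [mem_coe] at hx hy
    simp only [dif_pos hx, dif_pos hy]
    exact e.strictMono hxy
  · ext y
    simp only [mem_image]
    constructor
    · rintro ⟨x, hx, rfl⟩
      simp [hx]
    · intro hy
      exact ⟨e.symm ⟨y, hy⟩, (e.symm ⟨y, hy⟩).2, by simp⟩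

lemma card_crossingFree_support_le (h : #s = #t) :
    #{E ∈ crossingFree (· ≤ ·) s k | support E = s} ≤
      #{E ∈ crossingFree (· ≤ ·) t k | support E = t} := by
  obtain ⟨f, hf, hst⟩ := exists_strictMonoOn_image_eq h
  refine card_le_card_of_injOn (·.image (Prod.map f f)) (fun E hE ↦ ?_) ?_
  · simp only [mem_coe, mem_filter, mem_crossingFree] at hE ⊢
    obtain ⟨⟨-, hE, hnot⟩, hEs⟩ := hE
    have hsupp : support (E.image (Prod.map f f)) = t := by rw [support_image, hEs, hst]
    subst hEs
    have hr : ∀ x ∈ support E, ∀ y ∈ support E, f x ≤ f y ↔ x ≤ y := fun x hx y hy ↦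
      hf.le_iff_le hx hy
    exact ⟨⟨subset_product_iff_support_subset.2 hsupp.le,
      (isArcSet_image_iff hf.injOn hf.injOn hr).2 hE,
      (hasCrossing_image_iff hf hf hr).not.2 hnot⟩, hsupp⟩
  · refine (image_injOn_powerset_of_injOn (s := s ×ˢ s) ?_).mono fun E hE ↦ ?_
    · rw [coe_product]
      exact hf.injOn.prodMap hf.injOn
    · simp only [mem_coe, mem_filter, mem_crossingFree] at hE
      exact mem_powerset.2 hE.1.1

theorem card_crossingFree_support_congr (h : #s = #t) :
    #{E ∈ crossingFree (· ≤ ·) s k | support E = s} =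
      #{E ∈ crossingFree (· ≤ ·) t k | support E = t} :=
  (card_crossingFree_support_le h).antisymm (card_crossingFree_support_le h.symm)

end Counting

end ArcDiagram

open ArcDiagram

theorem stmt0_general (n k : ℕ) :
    Nat.card {π : Finpartition (Finset.Icc 1 (n+1)) // ¬ ClCross π k} =
      ∑ i ∈ Finset.range (n+1), n.choose i *
        Nat.card {π : Finpartition (Finset.Icc 1 i) // ¬ EnhCross π k} := by
  have htransport (t : Finset ℕ) : #{E ∈ crossingFree (· ≤ ·) t k | support E = t} =
      Nat.card {π : Finpartition (Icc 1 #t) // ¬EnhCross π k} := by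
    rw [card_not_enhCross]
    exact card_crossingFree_support_congr (by simp)
  rw [card_not_clCross, card_crossingFree_lt_succ, card_crossingFree_eq_sum,
    sum_congr rfl fun t _ ↦ htransport t,
    sum_powerset_apply_card fun i ↦ Nat.card {π : Finpartition (Icc 1 i) // ¬EnhCross π k}]
  simp

theorem stmt0 (n k : ℕ) (hk : 1 ≤ k) :
    Nat.card {π : Finpartition (Finset.Icc 1 (n+1)) // ¬ ClCross π k} =
      ∑ i ∈ Finset.range (n+1), n.choose i *
        Nat.card {π : Finpartition (Finset.Icc 1 i) // ¬ EnhCross π k} :=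
  stmt0_general n k
end

section
/- There is a bijection between the set of pairs (S, π) where S ⊆ [n] and π is a set partition of S, and the set of set partitions of [n+1]. -/
/-!
A partition of `[n+1]` is determined by the block `B` containing `n + 1` together
with a partition of the rest `S = [n+1] \ B ⊆ [n]`; conversely, any partition of any `S ⊆ [n]`
extends to a partition of `[n+1]` by the block `[n+1] \ S`.
-/

open Finset

namespace Finpartition

lemma parts_avoid_of_mem {α : Type*} [GeneralizedBooleanAlgebra α] [DecidableEq α] {a b : α}
    (P : Finpartition a) (hb : b ∈ P.parts) : (P.avoid b).parts = P.parts.erase b := by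
  ext c
  rw [mem_avoid, mem_erase]
  constructor
  · rintro ⟨d, hd, hdb, rfl⟩
    have hne : d ≠ b := fun h => hdb h.le
    have hdisj : Disjoint d b := P.disjoint hd hb hne
    rw [hdisj.sdiff_eq_left]
    exact ⟨hne, hd⟩
  · rintro ⟨hne, hc⟩
    have hdisj : Disjoint c b := P.disjoint hc hb hne
    exact ⟨c, hc, fun hle => P.ne_bot hc (hdisj.eq_bot_of_le hle),
      hdisj.sdiff_eq_left⟩

variable {α : Type*} [DecidableEq α] {U : Finset α} {a : α}

lemma mem_insert_sdiff_of_subset (ha : a ∉ U) {S : Finset α} (hS : S ⊆ U) :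
    a ∈ insert a U \ S :=
  mem_sdiff.2 ⟨mem_insert_self a U, fun h => ha (hS h)⟩

/-- Extends a partition of `S ⊆ U` to a partition of `insert a U` by the block `insert a U \ S`. -/
def extendByCompl (ha : a ∉ U) (p : Σ S : {S : Finset α // S ⊆ U}, Finpartition S.val) :
    Finpartition (insert a U) :=
  p.2.extend (ne_empty_of_mem (mem_insert_sdiff_of_subset ha p.1.2)) disjoint_sdiff
    (union_sdiff_of_subset (p.1.2.trans (subset_insert a U)))

lemma parts_extendByCompl (ha : a ∉ U) (p : Σ S : {S : Finset α // S ⊆ U}, Finpartition S.val) :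
    (extendByCompl ha p).parts = insert (insert a U \ p.1) p.2.parts :=
  rfl

lemma part_extendByCompl (ha : a ∉ U) (p : Σ S : {S : Finset α // S ⊆ U}, Finpartition S.val) :
    (extendByCompl ha p).part a = insert a U \ p.1 :=
  (extendByCompl ha p).part_eq_of_mem (by rw [parts_extendByCompl]; exact mem_insert_self _ _)
    (mem_insert_sdiff_of_subset ha p.1.2)

lemma compl_notMem_parts (ha : a ∉ U) {S : Finset α} (hS : S ⊆ U) (π : Finpartition S) :
    insert a U \ S ∉ π.parts := fun hB =>
  (mem_sdiff.1 (mem_insert_sdiff_of_subset ha hS)).2 (π.le hB (mem_insert_sdiff_of_subset ha hS))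

lemma extendByCompl_injective (ha : a ∉ U) : Function.Injective (extendByCompl ha) := by
  rintro ⟨⟨S₁, h₁⟩, π₁⟩ ⟨⟨S₂, h₂⟩, π₂⟩ h
  have hB : insert a U \ S₁ = insert a U \ S₂ := by
    simpa only [part_extendByCompl] using congrArg (part · a) h
  obtain rfl : S₁ = S₂ := by
    rw [← Finset.sdiff_sdiff_eq_self (h₁.trans (subset_insert a U)),
      ← Finset.sdiff_sdiff_eq_self (h₂.trans (subset_insert a U)), hB]
  obtain rfl : π₁ = π₂ := by
    ext1
    have hparts := congrArg (fun P => (Finpartition.parts P).erase (insert a U \ S₁)) h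
    simpa only [parts_extendByCompl, erase_insert (compl_notMem_parts ha h₁ _)] using hparts
  rfl

/-- The preimage of `σ` is `σ` restricted to the complement of the block of `a`. -/
lemma extendByCompl_surjective (ha : a ∉ U) : Function.Surjective (extendByCompl ha) := by
  intro σ
  have ha' : a ∈ insert a U := mem_insert_self a U
  have hrest : insert a U \ σ.part a ⊆ U := fun x hx => by
    obtain ⟨hxU, hxB⟩ := mem_sdiff.1 hx
    exact (mem_insert.1 hxU).resolve_left (by rintro rfl; exact hxB (σ.mem_part_self.2 ha'))
  refine ⟨⟨⟨_, hrest⟩, σ.avoid (σ.part a)⟩, Finpartition.ext ?_⟩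
  rw [parts_extendByCompl]
  dsimp only
  rw [Finset.sdiff_sdiff_eq_self (σ.part_subset a),
    parts_avoid_of_mem σ (σ.part_mem.2 ha'), insert_erase (σ.part_mem.2 ha')]

noncomputable def sigmaSubsetEquivInsert (ha : a ∉ U) :
    (Σ S : {S : Finset α // S ⊆ U}, Finpartition S.val) ≃ Finpartition (insert a U) :=
  Equiv.ofBijective (extendByCompl ha) ⟨extendByCompl_injective ha, extendByCompl_surjective ha⟩

end Finpartition

theorem stmt1 (n : ℕ) :
    Nonempty ((Σ S : {S : Finset ℕ // S ⊆ Finset.Icc 1 n}, Finpartition S.val) ≃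
      Finpartition (Finset.Icc 1 (n+1))) := by
  rw [← insert_Icc_right_eq_Icc_add_one (by omega)]
  exact ⟨Finpartition.sigmaSubsetEquivInsert (by simp)⟩
end

section
/- Under the map π ↦ π̂ from partitions of subsets of [n] to partitions of [n+1] (defined by joining v with w+1 for each consecutive pair v < w in a block of π, and joining u with u+1 for each singleton u of π), the enhanced k-crossings of π are in bijection with the classical k-crossings of π̂: specifically, a_1 < ... < a_k ≤ b_1 < ... < b_k is an enhanced k-crossing of π if and only if a_1 < ... < a_k < b_1+1 < ... < b_k+1 is a classical k-crossing of π̂. -/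
theorem stmt2 (n k : ℕ) (hk : 1 ≤ k) {s : Finset ℕ} (hs : s ⊆ Finset.Icc 1 n)
    (π : Finpartition s) (σ : Finpartition (Finset.Icc 1 (n+1))) (hσ : HatRel π σ)
    (a b : Fin k → ℕ) :
    (StrictMono a ∧ StrictMono b ∧ (∀ i j, a i ≤ b j) ∧ ∀ i, IsEArc π (a i) (b i)) ↔
    (StrictMono a ∧ StrictMono (fun i => b i + 1) ∧ (∀ i j, a i < b j + 1) ∧
      ∀ i, IsArc σ (a i) (b i + 1)) := by
  have harc : ∀ x y, IsEArc π x y ↔ IsArc σ x (y+1) := by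
    intro x y
    rw [hσ]
    constructor
    · rintro (h | ⟨rfl, h⟩)
      · exact Or.inl ⟨x, y, h, rfl, rfl⟩
      · exact Or.inr ⟨h, rfl⟩
    · rintro (⟨v, w, h, rfl, hw⟩ | ⟨h, hy⟩)
      · have : y = w := by omega
        subst this; exact Or.inl h
      · have : x = y := by omega
        exact Or.inr ⟨this, h⟩
  constructor
  · rintro ⟨h1, h2, h3, h4⟩
    exact ⟨h1, fun i j h => by simpa using h2 h, fun i j => by have := h3 i j; omega,
      fun i => (harc _ _).1 (h4 i)⟩
  · rintro ⟨h1, h2, h3, h4⟩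
    refine ⟨h1, fun i j h => ?_, fun i j => by have := h3 i j; omega,
      fun i => (harc _ _).2 (h4 i)⟩
    have := h2 h
    simpa using this
end

section
/- Under the map π ↦ π̂, the enhanced k-nestings of π correspond bijectively to the classical k-nestings of π̂: a sequence a_1 < ... < a_k ≤ b_k < ... < b_1 with each pair (a_i, b_i) an arc of π is an enhanced k-nesting of π if and only if a_1 < ... < a_k < b_k+1 < ... < b_1+1 is a classical k-nesting of π̂. -/
theorem stmt3 (n k : ℕ) (hk : 1 ≤ k) {s : Finset ℕ} (hs : s ⊆ Finset.Icc 1 n)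
    (π : Finpartition s) (σ : Finpartition (Finset.Icc 1 (n+1))) (hσ : HatRel π σ)
    (a b : Fin k → ℕ) :
    (StrictMono a ∧ StrictAnti b ∧ (∀ i j, a i ≤ b j) ∧ ∀ i, IsEArc π (a i) (b i)) ↔
    (StrictMono a ∧ StrictAnti (fun i => b i + 1) ∧ (∀ i j, a i < b j + 1) ∧
      ∀ i, IsArc σ (a i) (b i + 1)) := by
  have harc : ∀ x y : ℕ, IsEArc π x y ↔ IsArc σ x (y + 1) := by
    intro x y
    rw [hσ x (y + 1)]
    constructor
    · rintro (h | ⟨rfl, h⟩)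
      · exact Or.inl ⟨x, y, h, rfl, rfl⟩
      · exact Or.inr ⟨h, rfl⟩
    · rintro (⟨v, w, h, rfl, hw⟩ | ⟨h, hy⟩)
      · exact Or.inl (by simpa [Nat.succ_injective hw] using h)
      · exact Or.inr ⟨(Nat.succ_injective hy.symm), h⟩
  constructor
  · rintro ⟨h1, h2, h3, h4⟩
    exact ⟨h1, fun i j hij => by simpa using h2 hij,
      fun i j => Nat.lt_succ_of_le (h3 i j), fun i => (harc _ _).mp (h4 i)⟩
  · rintro ⟨h1, h2, h3, h4⟩
    exact ⟨h1, fun i j hij => by have := h2 hij; simpa using this,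
      fun i j => Nat.lt_succ_iff.mp (h3 i j), fun i => (harc _ _).mpr (h4 i)⟩
end

section
/- For all n ≥ 0, the number of noncrossing set partitions of [n+1] equals Σ_{i=0}^{n} binomial(n,i) · M_i, where M_i is the number of partitions of [i] with no enhanced 2-crossing (equivalently, C_2(n+1) = Σ binomial(n,i) E_2(i), relating Catalan numbers to Motzkin numbers). -/
open Finset

structure IsArcDiagram (A : Finset (ℕ × ℕ)) : Prop where
  lt : ∀ p ∈ A, p.1 < p.2
  injOn_fst : Set.InjOn Prod.fst (A : Set (ℕ × ℕ))
  injOn_snd : Set.InjOn Prod.snd (A : Set (ℕ × ℕ))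

def HasCrossing (A : Finset (ℕ × ℕ)) : Prop :=
  ∃ p ∈ A, ∃ q ∈ A, p.1 < q.1 ∧ q.1 < p.2 ∧ p.2 < q.2

def HasTransient (A : Finset (ℕ × ℕ)) : Prop :=
  ∃ p ∈ A, ∃ q ∈ A, p.2 = q.1

namespace IsArcDiagram

variable {A B A₁ A₂ : Finset (ℕ × ℕ)}

lemma mono (hA : IsArcDiagram A) (hBA : B ⊆ A) : IsArcDiagram B :=
  ⟨fun p hp ↦ hA.lt p (hBA hp), hA.injOn_fst.mono (coe_subset.2 hBA),
    hA.injOn_snd.mono (coe_subset.2 hBA)⟩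

lemma right_unique (hA : IsArcDiagram A) {x y z : ℕ} (hy : (x, y) ∈ A) (hz : (x, z) ∈ A) : y = z :=
  congrArg Prod.snd (hA.injOn_fst (mem_coe.2 hy) (mem_coe.2 hz) rfl)

lemma union (h₁ : IsArcDiagram A₁) (h₂ : IsArcDiagram A₂)
    (hfst : ∀ p ∈ A₁, ∀ q ∈ A₂, p.1 ≠ q.1) (hsnd : ∀ p ∈ A₁, ∀ q ∈ A₂, p.2 ≠ q.2) :
    IsArcDiagram (A₁ ∪ A₂) := by
  have hdisj : Disjoint (A₁ : Set (ℕ × ℕ)) A₂ :=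
    disjoint_coe.2 (disjoint_left.2 fun p hp hq ↦ hfst p hp p hq rfl)
  refine ⟨fun p hp ↦ ?_, ?_, ?_⟩
  · rcases mem_union.1 hp with hp | hp
    exacts [h₁.lt p hp, h₂.lt p hp]
  · rw [coe_union, Set.injOn_union hdisj]
    exact ⟨h₁.injOn_fst, h₂.injOn_fst, hfst⟩
  · rw [coe_union, Set.injOn_union hdisj]
    exact ⟨h₁.injOn_snd, h₂.injOn_snd, hsnd⟩

lemma insert (h : IsArcDiagram A) {x : ℕ × ℕ} (hx : x.1 < x.2) (hfst : ∀ p ∈ A, p.1 ≠ x.1)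
    (hsnd : ∀ p ∈ A, p.2 ≠ x.2) : IsArcDiagram (insert x A) := by
  have hxA : x ∉ (A : Set (ℕ × ℕ)) := fun hxA ↦ hfst x hxA rfl
  refine ⟨fun p hp ↦ ?_, ?_, ?_⟩
  · rcases mem_insert.1 hp with rfl | hp
    exacts [hx, h.lt p hp]
  · rw [coe_insert, Set.injOn_insert hxA]
    exact ⟨h.injOn_fst, fun ⟨p, hp, hpx⟩ ↦ hfst p hp hpx⟩
  · rw [coe_insert, Set.injOn_insert hxA]
    exact ⟨h.injOn_snd, fun ⟨p, hp, hpx⟩ ↦ hsnd p hp hpx⟩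

end IsArcDiagram

lemma HasCrossing.mono {A B : Finset (ℕ × ℕ)} (h : HasCrossing A) (hAB : A ⊆ B) :
    HasCrossing B :=
  let ⟨p, hp, q, hq, hpq⟩ := h
  ⟨p, hAB hp, q, hAB hq, hpq⟩

lemma HasTransient.mono {A B : Finset (ℕ × ℕ)} (h : HasTransient A) (hAB : A ⊆ B) :
    HasTransient B :=
  let ⟨p, hp, q, hq, hpq⟩ := h
  ⟨p, hAB hp, q, hAB hq, hpq⟩

noncomputable def chainStart (A : Finset (ℕ × ℕ)) (x : ℕ) : ℕ :=
  if h : ∃ p ∈ A, p.2 = x ∧ p.1 < x then chainStart A h.choose.1 else x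
termination_by x
decreasing_by exact h.choose_spec.2.2

section chainStart

variable {A : Finset (ℕ × ℕ)}

lemma chainStart_of_forall_ne {x : ℕ} (h : ∀ p ∈ A, p.2 ≠ x) : chainStart A x = x := by
  rw [chainStart, dif_neg]
  rintro ⟨p, hp, hpx, -⟩
  exact h p hp hpx

lemma chainStart_snd (hA : IsArcDiagram A) {p : ℕ × ℕ} (hp : p ∈ A) :
    chainStart A p.2 = chainStart A p.1 := by
  have h : ∃ q ∈ A, q.2 = p.2 ∧ q.1 < p.2 := ⟨p, hp, rfl, hA.lt p hp⟩
  rw [chainStart, dif_pos h, hA.injOn_snd (mem_coe.2 h.choose_spec.1) (mem_coe.2 hp)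
    h.choose_spec.2.1]

lemma chainStart_le (x : ℕ) : chainStart A x ≤ x := by
  induction x using Nat.strong_induction_on with
  | _ x ih =>
    rw [chainStart]
    split_ifs with h
    · exact (ih _ h.choose_spec.2.2).trans h.choose_spec.2.2.le
    · exact le_rfl

lemma exists_mem_le_of_chainStart_eq (hA : IsArcDiagram A) {x y : ℕ}
    (h : chainStart A x = chainStart A y) (hxy : x < y) : ∃ z, (x, z) ∈ A ∧ z ≤ y := by
  induction y using Nat.strong_induction_on generalizing x with
  | _ y ih =>
    by_cases hy : ∃ p ∈ A, p.2 = y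
    · obtain ⟨⟨w, _⟩, hp, rfl⟩ := hy
      have hw := chainStart_snd hA hp
      rcases lt_trichotomy w x with hwx | rfl | hxw
      · obtain ⟨z, hz, hzx⟩ := ih x hxy (by rw [h, hw]) hwx
        have := hA.right_unique hp hz
        omega
      · exact ⟨_, hp, le_rfl⟩
      · obtain ⟨z, hz, hzw⟩ := ih w (hA.lt _ hp) (by rw [h, hw]) hxw
        exact ⟨z, hz, hzw.trans (hA.lt _ hp).le⟩
    · push Not at hy
      have := chainStart_le (A := A) x
      rw [h, chainStart_of_forall_ne hy] at this
      omega

end chainStart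

lemma strictMono_fin_two {α : Type*} [Preorder α] {f : Fin 2 → α} :
    StrictMono f ↔ f 0 < f 1 := by
  simp [Fin.strictMono_iff_lt_succ]

namespace Finpartition

variable {s : Finset ℕ}

lemma isArc_iff {P : Finpartition s} {a b : ℕ} :
    IsArc P a b ↔ a ∈ s ∧ a < b ∧ b ∈ P.part a ∧ ∀ x ∈ P.part a, ¬(a < x ∧ x < b) := by
  constructor
  · rintro ⟨hab, B, hB, haB, hbB, hbetween⟩
    rw [P.part_eq_of_mem hB haB]
    exact ⟨P.le hB haB, hab, hbB, hbetween⟩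
  · rintro ⟨ha, hab, hb, hbetween⟩
    exact ⟨hab, _, P.part_mem.2 ha, P.mem_part ha, hb, hbetween⟩

open scoped Classical in
noncomputable def arcs (P : Finpartition s) : Finset (ℕ × ℕ) :=
  {p ∈ s ×ˢ s | IsArc P p.1 p.2}

lemma mem_arcs {P : Finpartition s} {p : ℕ × ℕ} : p ∈ P.arcs ↔ IsArc P p.1 p.2 := by
  classical
  unfold arcs
  rw [mem_filter, mem_product, and_iff_right_iff_imp, isArc_iff]
  exact fun ⟨ha, _, hb, _⟩ ↦ ⟨ha, P.part_subset _ hb⟩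

lemma arcs_subset (P : Finpartition s) : P.arcs ⊆ s ×ˢ s := by
  classical
  unfold arcs
  exact filter_subset _ _

lemma isArcDiagram_arcs (P : Finpartition s) : IsArcDiagram P.arcs where
  lt p hp := (mem_arcs.1 hp).1
  injOn_fst := by
    rintro ⟨a, b⟩ hp ⟨a', b'⟩ hq (rfl : a = a')
    obtain ⟨-, hp1, hp2, hp3⟩ := isArc_iff.1 (mem_arcs.1 (mem_coe.1 hp))
    obtain ⟨-, hq1, hq2, hq3⟩ := isArc_iff.1 (mem_arcs.1 (mem_coe.1 hq))
    refine Prod.ext rfl (le_antisymm ?_ ?_)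
    · exact not_lt.1 fun hlt ↦ hp3 _ hq2 ⟨hq1, hlt⟩
    · exact not_lt.1 fun hlt ↦ hq3 _ hp2 ⟨hp1, hlt⟩
  injOn_snd := by
    rintro ⟨a, b⟩ hp ⟨a', b'⟩ hq (rfl : b = b')
    obtain ⟨ha, hp1, hp2, hp3⟩ := isArc_iff.1 (mem_arcs.1 (mem_coe.1 hp))
    obtain ⟨ha', hq1, hq2, hq3⟩ := isArc_iff.1 (mem_arcs.1 (mem_coe.1 hq))
    have hpart : P.part a = P.part a' := by
      rw [← P.part_eq_of_mem (P.part_mem.2 ha) hp2, P.part_eq_of_mem (P.part_mem.2 ha') hq2]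
    refine Prod.ext (le_antisymm ?_ ?_) rfl
    · exact not_lt.1 fun hlt ↦ hq3 a (hpart ▸ P.mem_part ha) ⟨hlt, hp1⟩
    · exact not_lt.1 fun hlt ↦ hp3 a' (hpart ▸ P.mem_part ha') ⟨hlt, hq1⟩

lemma isLeast_chainStart_arcs (P : Finpartition s) {y : ℕ} (hy : y ∈ s) :
    IsLeast (P.part y : Set ℕ) (chainStart P.arcs y) := by
  induction y using Nat.strong_induction_on with
  | _ y ih =>
    by_cases hbelow : ∃ x ∈ P.part y, x < y
    · classical
      have hT : ({x ∈ P.part y | x < y} : Finset ℕ).Nonempty := by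
        simpa [Finset.Nonempty] using hbelow
      set w := ({x ∈ P.part y | x < y} : Finset ℕ).max' hT
      obtain ⟨hwy, hw⟩ := mem_filter.1 (max'_mem _ hT)
      have hws : w ∈ s := P.part_subset y hwy
      have hpart : P.part w = P.part y := P.part_eq_of_mem (P.part_mem.2 hy) hwy
      have harc : (w, y) ∈ P.arcs := by
        refine mem_arcs.2 (isArc_iff.2 ⟨hws, hw, hpart ▸ P.mem_part hy, fun x hx hbetween ↦ ?_⟩)
        have : x ≤ w := le_max' _ x (mem_filter.2 ⟨hpart ▸ hx, hbetween.2⟩)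
        omega
      rw [← hpart, chainStart_snd (isArcDiagram_arcs P) harc]
      exact ih w hw hws
    · push Not at hbelow
      refine chainStart_of_forall_ne (fun p hp hpy ↦ ?_) ▸ ⟨P.mem_part hy, hbelow⟩
      obtain ⟨hps, hlt, hp2, -⟩ := isArc_iff.1 (mem_arcs.1 hp)
      have : p.1 ∈ P.part y := by
        rw [← hpy, P.part_eq_of_mem (P.part_mem.2 hps) hp2]
        exact P.mem_part hps
      have := hbelow _ this
      omega

lemma mem_part_iff_chainStart_eq (P : Finpartition s) {x y : ℕ} :
    y ∈ P.part x ↔ x ∈ s ∧ y ∈ s ∧ chainStart P.arcs x = chainStart P.arcs y := by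
  constructor
  · intro hy
    have hx : x ∈ s := P.part_nonempty.1 ⟨y, hy⟩
    have hys : y ∈ s := P.part_subset x hy
    refine ⟨hx, hys, (P.isLeast_chainStart_arcs hx).unique ?_⟩
    rw [← P.part_eq_of_mem (P.part_mem.2 hx) hy]
    exact P.isLeast_chainStart_arcs hys
  · rintro ⟨hx, hy, h⟩
    have hxy := (P.isLeast_chainStart_arcs hy).1
    rw [← h] at hxy
    rw [← P.part_eq_of_mem (P.part_mem.2 hx) (P.isLeast_chainStart_arcs hx).1,
      P.part_eq_of_mem (P.part_mem.2 hy) hxy]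
    exact P.mem_part hy

open scoped Classical in
noncomputable def ofArcs (s : Finset ℕ) (A : Finset (ℕ × ℕ)) : Finpartition s :=
  ofSetSetoid (Setoid.ker (chainStart A)) s

open scoped Classical in
lemma mem_part_ofArcs {A : Finset (ℕ × ℕ)} {x y : ℕ} :
    y ∈ (ofArcs s A).part x ↔ x ∈ s ∧ y ∈ s ∧ chainStart A x = chainStart A y :=
  mem_part_ofSetSetoid_iff_rel s

lemma ext_part {P Q : Finpartition s} (h : ∀ x, P.part x = Q.part x) : P = Q := by
  ext t
  constructor
  · intro ht
    obtain ⟨x, hx⟩ := P.nonempty_of_mem_parts ht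
    rw [← P.part_eq_of_mem ht hx, h]
    exact Q.part_mem.2 (P.le ht hx)
  · intro ht
    obtain ⟨x, hx⟩ := Q.nonempty_of_mem_parts ht
    rw [← Q.part_eq_of_mem ht hx, ← h]
    exact P.part_mem.2 (Q.le ht hx)

lemma ofArcs_arcs (P : Finpartition s) : ofArcs s P.arcs = P :=
  ext_part fun x ↦ by ext y; rw [mem_part_ofArcs, mem_part_iff_chainStart_eq]

lemma arcs_ofArcs {A : Finset (ℕ × ℕ)} (hs : A ⊆ s ×ˢ s) (hA : IsArcDiagram A) :
    (ofArcs s A).arcs = A := by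
  have hmem : ∀ {u v}, (u, v) ∈ A → u ∈ s ∧ v ∈ s := fun h ↦ mem_product.1 (hs h)
  ext ⟨u, v⟩
  rw [mem_arcs, isArc_iff, mem_part_ofArcs]
  constructor
  · rintro ⟨hu, huv, ⟨-, hv, h⟩, hbetween⟩
    obtain ⟨z, hz, hzv⟩ := exists_mem_le_of_chainStart_eq hA h huv
    obtain rfl : z = v := by
      by_contra hne
      refine hbetween z ?_ ⟨hA.lt _ hz, lt_of_le_of_ne hzv hne⟩
      exact mem_part_ofArcs.2 ⟨hu, (hmem hz).2, (chainStart_snd hA hz).symm⟩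
    exact hz
  · intro huv
    refine ⟨(hmem huv).1, hA.lt _ huv, ⟨(hmem huv).1, (hmem huv).2,
      (chainStart_snd hA huv).symm⟩, fun x hx ⟨hux, hxv⟩ ↦ ?_⟩
    obtain ⟨z, hz, hzx⟩ := exists_mem_le_of_chainStart_eq hA (mem_part_ofArcs.1 hx).2.2 hux
    have := hA.right_unique huv hz
    omega

noncomputable def arcsEquiv (s : Finset ℕ) :
    Finpartition s ≃ {A : Finset (ℕ × ℕ) // A ⊆ s ×ˢ s ∧ IsArcDiagram A} where
  toFun P := ⟨P.arcs, P.arcs_subset, P.isArcDiagram_arcs⟩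
  invFun A := ofArcs s A
  left_inv := ofArcs_arcs
  right_inv A := Subtype.ext (arcs_ofArcs A.2.1 A.2.2)

lemma clCross_two_iff (P : Finpartition s) : ClCross P 2 ↔ HasCrossing P.arcs := by
  constructor
  · rintro ⟨a, b, ha, hb, hab, harc⟩
    exact ⟨(a 0, b 0), mem_arcs.2 (harc 0), (a 1, b 1), mem_arcs.2 (harc 1),
      strictMono_fin_two.1 ha, hab 1 0, strictMono_fin_two.1 hb⟩
  · rintro ⟨p, hp, q, hq, h₁, h₂, h₃⟩
    have := (isArcDiagram_arcs P).lt p hp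
    refine ⟨![p.1, q.1], ![p.2, q.2], by simpa using h₁, by simpa using h₃, ?_, ?_⟩
    · simp [Fin.forall_fin_two]
      omega
    · simpa [Fin.forall_fin_two] using ⟨mem_arcs.1 hp, mem_arcs.1 hq⟩

lemma enhCross_two_iff (P : Finpartition s) :
    EnhCross P 2 ↔ HasCrossing P.arcs ∨ HasTransient P.arcs := by
  constructor
  · rintro ⟨a, b, ha, hb, hab, harc⟩
    have ha01 := strictMono_fin_two.1 ha
    have hb01 := strictMono_fin_two.1 hb
    have h10 := hab 1 0
    obtain h₀ | ⟨h₀, -⟩ := harc 0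
    · obtain h₁ | ⟨h₁, -⟩ := harc 1
      · rcases h10.lt_or_eq with h10 | h10
        · exact Or.inl ⟨(a 0, b 0), mem_arcs.2 h₀, (a 1, b 1), mem_arcs.2 h₁, ha01, h10, hb01⟩
        · exact Or.inr ⟨(a 0, b 0), mem_arcs.2 h₀, (a 1, b 1), mem_arcs.2 h₁, h10.symm⟩
      · omega
    · omega
  · intro h
    obtain ⟨p, hp, q, hq, h₁, h₂, h₃⟩ :
        ∃ p ∈ P.arcs, ∃ q ∈ P.arcs, p.1 < q.1 ∧ q.1 ≤ p.2 ∧ p.2 < q.2 := by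
      rcases h with ⟨p, hp, q, hq, h₁, h₂, h₃⟩ | ⟨p, hp, q, hq, hpq⟩
      · exact ⟨p, hp, q, hq, h₁, h₂.le, h₃⟩
      · have := (isArcDiagram_arcs P).lt p hp
        have := (isArcDiagram_arcs P).lt q hq
        exact ⟨p, hp, q, hq, by omega, hpq.ge, by omega⟩
    have := (isArcDiagram_arcs P).lt p hp
    refine ⟨![p.1, q.1], ![p.2, q.2], by simpa using h₁, by simpa using h₃, ?_, ?_⟩
    · simp [Fin.forall_fin_two]
      omega
    · simpa [Fin.forall_fin_two, IsEArc] using ⟨Or.inl (mem_arcs.1 hp), Or.inl (mem_arcs.1 hq)⟩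

end Finpartition

open scoped Classical in
noncomputable def arcDiagrams (s : Finset ℕ) (Q : Finset (ℕ × ℕ) → Prop) :
    Finset (Finset (ℕ × ℕ)) :=
  {A ∈ (s ×ˢ s).powerset | IsArcDiagram A ∧ Q A}

section arcDiagrams

variable {s : Finset ℕ} {Q : Finset (ℕ × ℕ) → Prop} {A : Finset (ℕ × ℕ)}

lemma mem_arcDiagrams : A ∈ arcDiagrams s Q ↔ A ⊆ s ×ˢ s ∧ IsArcDiagram A ∧ Q A := by
  classical
  unfold arcDiagrams
  rw [mem_filter, mem_powerset]

lemma card_finpartition_eq_card_arcDiagrams (s : Finset ℕ) (Q : Finset (ℕ × ℕ) → Prop) :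
    Nat.card {P : Finpartition s // Q P.arcs} = #(arcDiagrams s Q) := by
  rw [← Nat.card_eq_finsetCard]
  refine Nat.card_congr (((Finpartition.arcsEquiv s).subtypeEquiv fun P ↦ Iff.rfl).trans
    ((Equiv.subtypeSubtypeEquivSubtypeInter _ Q).trans (Equiv.subtypeEquivRight fun A ↦ ?_)))
  rw [mem_arcDiagrams, and_assoc]

lemma arcDiagrams_empty (hQ : Q ∅) : arcDiagrams ∅ Q = {∅} := by
  ext A
  rw [mem_arcDiagrams, mem_singleton, empty_product, subset_empty]
  constructor
  · exact fun h ↦ h.1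
  · rintro rfl
    exact ⟨rfl, ⟨by simp, by simp, by simp⟩, hQ⟩

variable {a b c : ℕ}

lemma mem_arcDiagrams_Icc :
    A ∈ arcDiagrams (Icc a b) Q ↔ IsArcDiagram A ∧ (∀ p ∈ A, a ≤ p.1 ∧ p.2 ≤ b) ∧ Q A := by
  rw [mem_arcDiagrams]
  constructor
  · rintro ⟨hs, hD, hQ⟩
    refine ⟨hD, fun p hp ↦ ?_, hQ⟩
    have := mem_product.1 (hs hp)
    simp only [mem_Icc] at this
    omega
  · rintro ⟨hD, hb, hQ⟩
    refine ⟨fun p hp ↦ ?_, hD, hQ⟩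
    have := hb p hp
    have := hD.lt p hp
    simp only [mem_product, mem_Icc]
    omega

lemma filter_forall_fst_ne_arcDiagrams_Icc :
    {A ∈ arcDiagrams (Icc a b) Q | ∀ p ∈ A, p.1 ≠ a} = arcDiagrams (Icc (a + 1) b) Q := by
  ext A
  simp only [mem_filter, mem_arcDiagrams_Icc]
  constructor
  · rintro ⟨⟨hD, hb, hQ⟩, ha⟩
    refine ⟨hD, fun p hp ↦ ?_, hQ⟩
    have := hb p hp
    have := ha p hp
    omega
  · rintro ⟨hD, hb, hQ⟩
    refine ⟨⟨hD, fun p hp ↦ ?_, hQ⟩, fun p hp ↦ ?_⟩ <;>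
    · have := hb p hp
      omega

lemma card_arcDiagrams_Icc (Q : Finset (ℕ × ℕ) → Prop) (a b : ℕ) :
    #(arcDiagrams (Icc a b) Q) = #(arcDiagrams (Icc (a + 1) b) Q) +
      ∑ c ∈ Ioc a b, #{A ∈ arcDiagrams (Icc a b) Q | (a, c) ∈ A} := by
  rw [← card_filter_add_card_filter_not (fun A ↦ ∀ p ∈ A, p.1 ≠ a),
    filter_forall_fst_ne_arcDiagrams_Icc, ← card_biUnion]
  · congr 2
    ext A
    simp only [mem_filter, mem_biUnion, mem_Ioc, not_forall, not_not]
    constructor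
    · rintro ⟨hA, p, hp, rfl⟩
      have := (mem_arcDiagrams_Icc.1 hA).2.1 p hp
      have := (mem_arcDiagrams_Icc.1 hA).1.lt p hp
      exact ⟨p.2, by omega, hA, hp⟩
    · rintro ⟨c, -, hA, hc⟩
      exact ⟨hA, _, hc, rfl⟩
  · intro c _ c' _ hcc'
    refine disjoint_left.2 fun A hc hc' ↦ hcc' ?_
    rw [mem_filter, mem_arcDiagrams] at hc hc'
    exact hc.1.2.1.right_unique hc.2 hc'.2

end arcDiagrams

section Decomposition

variable {a b c : ℕ} {A₁ A₂ B : Finset (ℕ × ℕ)}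

lemma isArcDiagram_insert_union (hac : a < c) (hD₁ : IsArcDiagram A₁) (hD₂ : IsArcDiagram A₂)
    (h₁ : ∀ p ∈ A₁, a < p.1 ∧ p.2 < c) (h₂ : ∀ p ∈ A₂, c ≤ p.1) :
    IsArcDiagram (insert (a, c) (A₁ ∪ A₂)) := by
  refine (hD₁.union hD₂ (fun p hp q hq ↦ ?_) (fun p hp q hq ↦ ?_)).insert hac
    (fun p hp ↦ ?_) (fun p hp ↦ ?_)
  · have := h₁ p hp; have := hD₁.lt p hp; have := h₂ q hq; omega
  · have := h₁ p hp; have := h₂ q hq; have := hD₂.lt q hq; omega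
  · rcases mem_union.1 hp with hp | hp
    · have := h₁ p hp; omega
    · have := h₂ p hp; omega
  · rcases mem_union.1 hp with hp | hp
    · have := h₁ p hp; omega
    · have := h₂ p hp; have := hD₂.lt p hp; omega

lemma not_hasCrossing_insert_union (h₁ : ∀ p ∈ A₁, a < p.1 ∧ p.2 < c)
    (h₂ : ∀ p ∈ A₂, c ≤ p.1) (hX₁ : ¬HasCrossing A₁) (hX₂ : ¬HasCrossing A₂) :
    ¬HasCrossing (insert (a, c) (A₁ ∪ A₂)) := by
  rintro ⟨p, hp, q, hq, hpq⟩
  simp only [mem_insert, mem_union] at hp hq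
  rcases hp with rfl | hp | hp <;> rcases hq with rfl | hq | hq
  · omega
  · have := h₁ q hq; omega
  · have := h₂ q hq; omega
  · have := h₁ p hp; omega
  · exact hX₁ ⟨p, hp, q, hq, hpq⟩
  · have := h₁ p hp; have := h₂ q hq; omega
  · have := h₂ p hp; omega
  · have := h₂ p hp; have := h₁ q hq; omega
  · exact hX₂ ⟨p, hp, q, hq, hpq⟩

lemma not_hasTransient_insert_union (hac : a < c) (hD₁ : IsArcDiagram A₁)
    (hD₂ : IsArcDiagram A₂) (h₁ : ∀ p ∈ A₁, a < p.1 ∧ p.2 < c) (h₂ : ∀ p ∈ A₂, c < p.1)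
    (hT₁ : ¬HasTransient A₁) (hT₂ : ¬HasTransient A₂) :
    ¬HasTransient (insert (a, c) (A₁ ∪ A₂)) := by
  rintro ⟨p, hp, q, hq, hpq⟩
  simp only [mem_insert, mem_union] at hp hq
  rcases hp with rfl | hp | hp <;> rcases hq with rfl | hq | hq
  · omega
  · have := h₁ q hq; have := hD₁.lt q hq; omega
  · have := h₂ q hq; omega
  · have := h₁ p hp; have := hD₁.lt p hp; omega
  · exact hT₁ ⟨p, hp, q, hq, hpq⟩
  · have := h₁ p hp; have := h₂ q hq; omega
  · have := h₂ p hp; have := hD₂.lt p hp; omega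
  · have := h₂ p hp; have := hD₂.lt p hp; have := h₁ q hq; have := hD₁.lt q hq; omega
  · exact hT₂ ⟨p, hp, q, hq, hpq⟩

lemma filter_snd_lt_insert_union (hD₂ : IsArcDiagram A₂) (h₁ : ∀ p ∈ A₁, p.2 < c)
    (h₂ : ∀ p ∈ A₂, c ≤ p.1) : {p ∈ insert (a, c) (A₁ ∪ A₂) | p.2 < c} = A₁ := by
  ext p
  simp only [mem_filter, mem_insert, mem_union]
  constructor
  · rintro ⟨rfl | hp | hp, hpc⟩
    · exact absurd hpc (lt_irrefl c)
    · exact hp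
    · have := h₂ p hp; have := hD₂.lt p hp; omega
  · exact fun hp ↦ ⟨Or.inr (Or.inl hp), h₁ p hp⟩

lemma filter_le_fst_insert_union (hac : a < c) (hD₁ : IsArcDiagram A₁) (h₁ : ∀ p ∈ A₁, p.2 < c)
    (h₂ : ∀ p ∈ A₂, c ≤ p.1) : {p ∈ insert (a, c) (A₁ ∪ A₂) | c ≤ p.1} = A₂ := by
  ext p
  simp only [mem_filter, mem_insert, mem_union]
  constructor
  · rintro ⟨rfl | hp | hp, hpc⟩
    · exact absurd hpc (not_le.2 hac)
    · have := h₁ p hp; have := hD₁.lt p hp; omega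
    · exact hp
  · exact fun hp ↦ ⟨Or.inr (Or.inr hp), h₂ p hp⟩

lemma fst_gt_of_snd_lt (hD : IsArcDiagram B) (hb : ∀ p ∈ B, a ≤ p.1) (hac : (a, c) ∈ B)
    {p : ℕ × ℕ} (hp : p ∈ B) (hpc : p.2 < c) : a < p.1 := by
  refine lt_of_le_of_ne (hb p hp) fun hpa ↦ ?_
  have := congrArg Prod.snd (hD.injOn_fst (mem_coe.2 hac) (mem_coe.2 hp) hpa)
  omega

/-- Without crossings, an arc starting strictly between `a` and `c` must also end before `c`. -/
lemma insert_filter_union_filter (hD : IsArcDiagram B) (hb : ∀ p ∈ B, a ≤ p.1)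
    (hX : ¬HasCrossing B) (hac : (a, c) ∈ B) :
    insert (a, c) ({p ∈ B | p.2 < c} ∪ {p ∈ B | c ≤ p.1}) = B := by
  refine (insert_subset hac (union_subset (filter_subset _ _) (filter_subset _ _))).antisymm
    fun p hp ↦ ?_
  simp only [mem_insert, mem_union, mem_filter]
  by_cases hpc : c ≤ p.1
  · exact Or.inr (Or.inr ⟨hp, hpc⟩)
  rcases lt_trichotomy p.2 c with hlt | heq | hgt
  · exact Or.inr (Or.inl ⟨hp, hlt⟩)
  · exact Or.inl (hD.injOn_snd (mem_coe.2 hp) (mem_coe.2 hac) heq)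
  · rcases (hb p hp).lt_or_eq with hap | hap
    · exact absurd ⟨(a, c), hac, p, hp, hap, by omega, hgt⟩ hX
    · have := congrArg Prod.snd (hD.injOn_fst (mem_coe.2 hac) (mem_coe.2 hp) hap)
      omega

end Decomposition

section Fibers

variable {a b c : ℕ}

/-- The bijection sends `B` to its arcs ending before `c` and its arcs starting from `c`; the
inverse is `(A₁, A₂) ↦ insert (a, c) (A₁ ∪ A₂)`. -/
lemma card_filter_mem_eq_card_mul_card {S T₁ T₂ : Finset (Finset (ℕ × ℕ))} (hac : a < c)
    (hS : ∀ B ∈ S, IsArcDiagram B ∧ (∀ p ∈ B, a ≤ p.1) ∧ ¬HasCrossing B)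
    (hT₁ : ∀ A ∈ T₁, IsArcDiagram A ∧ ∀ p ∈ A, p.2 < c)
    (hT₂ : ∀ A ∈ T₂, IsArcDiagram A ∧ ∀ p ∈ A, c ≤ p.1)
    (hsplit : ∀ B ∈ S, (a, c) ∈ B → {p ∈ B | p.2 < c} ∈ T₁ ∧ {p ∈ B | c ≤ p.1} ∈ T₂)
    (hjoin : ∀ A₁ ∈ T₁, ∀ A₂ ∈ T₂, insert (a, c) (A₁ ∪ A₂) ∈ S) :
    #{B ∈ S | (a, c) ∈ B} = #T₁ * #T₂ := by
  rw [← card_product]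
  refine card_nbij' (fun B ↦ ({p ∈ B | p.2 < c}, {p ∈ B | c ≤ p.1}))
    (fun A ↦ insert (a, c) (A.1 ∪ A.2)) (fun B hB ↦ ?_) (fun A hA ↦ ?_) (fun B hB ↦ ?_)
    (fun A hA ↦ ?_)
  · obtain ⟨hBS, hacB⟩ := mem_filter.1 hB
    exact mem_product.2 (hsplit B hBS hacB)
  · obtain ⟨hA₁, hA₂⟩ := mem_product.1 hA
    exact mem_filter.2 ⟨hjoin _ hA₁ _ hA₂, mem_insert_self _ _⟩
  · obtain ⟨hBS, hacB⟩ := mem_filter.1 hB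
    obtain ⟨hD, hb, hX⟩ := hS B hBS
    exact insert_filter_union_filter hD hb hX hacB
  · obtain ⟨hA₁, hA₂⟩ := mem_product.1 hA
    obtain ⟨hD₁, h₁⟩ := hT₁ _ hA₁
    obtain ⟨hD₂, h₂⟩ := hT₂ _ hA₂
    exact Prod.ext (filter_snd_lt_insert_union hD₂ h₁ h₂)
      (filter_le_fst_insert_union hac hD₁ h₁ h₂)

lemma card_filter_mem_noncrossing (hac : a < c) (hcb : c ≤ b) :
    #{B ∈ arcDiagrams (Icc a b) (¬HasCrossing ·) | (a, c) ∈ B} =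
      #(arcDiagrams (Icc (a + 1) (c - 1)) (¬HasCrossing ·)) *
        #(arcDiagrams (Icc c b) (¬HasCrossing ·)) := by
  refine card_filter_mem_eq_card_mul_card hac (fun B hB ↦ ?_) (fun A hA ↦ ?_) (fun A hA ↦ ?_)
    (fun B hB hacB ↦ ?_) (fun A₁ hA₁ A₂ hA₂ ↦ ?_) <;>
    simp only [mem_arcDiagrams_Icc] at *
  · exact ⟨hB.1, fun p hp ↦ (hB.2.1 p hp).1, hB.2.2⟩
  · exact ⟨hA.1, fun p hp ↦ by have := hA.2.1 p hp; omega⟩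
  · exact ⟨hA.1, fun p hp ↦ (hA.2.1 p hp).1⟩
  · obtain ⟨hD, hb, hX⟩ := hB
    refine ⟨⟨hD.mono (filter_subset _ _), fun p hp ↦ ?_, fun h ↦ hX (h.mono (filter_subset _ _))⟩,
      ⟨hD.mono (filter_subset _ _), fun p hp ↦ ?_, fun h ↦ hX (h.mono (filter_subset _ _))⟩⟩
    · obtain ⟨hp, hpc⟩ := mem_filter.1 hp
      have := fst_gt_of_snd_lt hD (fun p hp ↦ (hb p hp).1) hacB hp hpc
      omega
    · obtain ⟨hp, hpc⟩ := mem_filter.1 hp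
      exact ⟨hpc, (hb p hp).2⟩
  · obtain ⟨hD₁, hb₁, hX₁⟩ := hA₁
    obtain ⟨hD₂, hb₂, hX₂⟩ := hA₂
    have h₁ : ∀ p ∈ A₁, a < p.1 ∧ p.2 < c := fun p hp ↦ by have := hb₁ p hp; omega
    have h₂ : ∀ p ∈ A₂, c ≤ p.1 := fun p hp ↦ (hb₂ p hp).1
    refine ⟨isArcDiagram_insert_union hac hD₁ hD₂ h₁ h₂, fun p hp ↦ ?_,
      not_hasCrossing_insert_union h₁ h₂ hX₁ hX₂⟩
    simp only [mem_insert, mem_union] at hp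
    rcases hp with rfl | hp | hp
    · exact ⟨le_rfl, hcb⟩
    · have := hb₁ p hp; omega
    · have := hb₂ p hp; omega

lemma card_filter_mem_motzkin (hac : a < c) (hcb : c ≤ b) :
    #{B ∈ arcDiagrams (Icc a b) (fun A ↦ ¬HasCrossing A ∧ ¬HasTransient A) | (a, c) ∈ B} =
      #(arcDiagrams (Icc (a + 1) (c - 1)) (fun A ↦ ¬HasCrossing A ∧ ¬HasTransient A)) *
        #(arcDiagrams (Icc (c + 1) b) (fun A ↦ ¬HasCrossing A ∧ ¬HasTransient A)) := by
  refine card_filter_mem_eq_card_mul_card hac (fun B hB ↦ ?_) (fun A hA ↦ ?_) (fun A hA ↦ ?_)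
    (fun B hB hacB ↦ ?_) (fun A₁ hA₁ A₂ hA₂ ↦ ?_) <;>
    simp only [mem_arcDiagrams_Icc] at *
  · exact ⟨hB.1, fun p hp ↦ (hB.2.1 p hp).1, hB.2.2.1⟩
  · exact ⟨hA.1, fun p hp ↦ by have := hA.2.1 p hp; omega⟩
  · exact ⟨hA.1, fun p hp ↦ by have := hA.2.1 p hp; omega⟩
  · obtain ⟨hD, hb, hX, hT⟩ := hB
    refine ⟨⟨hD.mono (filter_subset _ _), fun p hp ↦ ?_, fun h ↦ hX (h.mono (filter_subset _ _)),
      fun h ↦ hT (h.mono (filter_subset _ _))⟩, ⟨hD.mono (filter_subset _ _), fun p hp ↦ ?_,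
      fun h ↦ hX (h.mono (filter_subset _ _)), fun h ↦ hT (h.mono (filter_subset _ _))⟩⟩
    · obtain ⟨hp, hpc⟩ := mem_filter.1 hp
      have := fst_gt_of_snd_lt hD (fun p hp ↦ (hb p hp).1) hacB hp hpc
      omega
    · obtain ⟨hp, hpc⟩ := mem_filter.1 hp
      have hpc' : p.1 ≠ c := fun h ↦ hT ⟨(a, c), hacB, p, hp, h.symm⟩
      exact ⟨by omega, (hb p hp).2⟩
  · obtain ⟨hD₁, hb₁, hX₁, hT₁⟩ := hA₁
    obtain ⟨hD₂, hb₂, hX₂, hT₂⟩ := hA₂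
    have h₁ : ∀ p ∈ A₁, a < p.1 ∧ p.2 < c := fun p hp ↦ by have := hb₁ p hp; omega
    have h₂ : ∀ p ∈ A₂, c < p.1 := fun p hp ↦ (hb₂ p hp).1
    refine ⟨isArcDiagram_insert_union hac hD₁ hD₂ h₁ (fun p hp ↦ (h₂ p hp).le), fun p hp ↦ ?_,
      not_hasCrossing_insert_union h₁ (fun p hp ↦ (h₂ p hp).le) hX₁ hX₂,
      not_hasTransient_insert_union hac hD₁ hD₂ h₁ h₂ hT₁ hT₂⟩
    simp only [mem_insert, mem_union] at hp
    rcases hp with rfl | hp | hp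
    · exact ⟨le_rfl, hcb⟩
    · have := hb₁ p hp; omega
    · have := hb₂ p hp; omega

end Fibers

def motzkin : ℕ → ℕ
  | 0 => 1
  | n + 1 => motzkin n + ∑ i : Fin n, motzkin i * motzkin (n - 1 - i)

@[simp]
lemma motzkin_zero : motzkin 0 = 1 := by rw [motzkin]

lemma motzkin_succ (n : ℕ) :
    motzkin (n + 1) = motzkin n + ∑ i ∈ range n, motzkin i * motzkin (n - 1 - i) := by
  rw [motzkin, Fin.sum_univ_eq_sum_range (fun i ↦ motzkin i * motzkin (n - 1 - i))]

@[simp]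
lemma motzkin_one : motzkin 1 = 1 := by simp [motzkin_succ]

lemma motzkin_add_two (n : ℕ) :
    motzkin (n + 2) = motzkin (n + 1) + ∑ ij ∈ antidiagonal n, motzkin ij.1 * motzkin ij.2 := by
  rw [motzkin_succ, Nat.sum_antidiagonal_eq_sum_range_succ_mk]
  rfl

lemma catalan_add_three (n : ℕ) : catalan (n + 3) =
    2 * catalan (n + 2) + ∑ ij ∈ antidiagonal n, catalan (ij.1 + 1) * catalan (ij.2 + 1) := by
  rw [catalan_succ', Nat.sum_antidiagonal_succ, Nat.sum_antidiagonal_succ']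
  simp only [catalan_zero]
  ring

def binomialTransform (f : ℕ → ℕ) (n : ℕ) : ℕ :=
  ∑ i ∈ range (n + 1), n.choose i * f i

@[simp]
lemma binomialTransform_zero (f : ℕ → ℕ) : binomialTransform f 0 = f 0 := by
  simp [binomialTransform]

lemma binomialTransform_eq_add_sum (f : ℕ → ℕ) (n : ℕ) :
    binomialTransform f n = f 0 + ∑ i ∈ range n, n.choose (i + 1) * f (i + 1) := by
  rw [binomialTransform, sum_range_succ', Nat.choose_zero_right, one_mul, add_comm]

lemma binomialTransform_succ (f : ℕ → ℕ) (n : ℕ) : binomialTransform f (n + 1) =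
    binomialTransform f n + binomialTransform (fun i ↦ f (i + 1)) n := by
  rw [binomialTransform_eq_add_sum, binomialTransform_eq_add_sum f n, binomialTransform]
  simp only [Nat.choose_succ_succ, add_mul, sum_add_distrib, sum_range_succ _ n,
    Nat.choose_succ_self, zero_mul, add_zero]
  ring

/-- The binomial transform `B` turns the shifted Cauchy product `x f g` into `x (B f) (B g)`. -/
lemma sum_choose_succ_mul_sum_antidiagonal (f g : ℕ → ℕ) (n : ℕ) :
    ∑ i ∈ range (n + 1), (n + 1).choose (i + 1) * ∑ ij ∈ antidiagonal i, f ij.1 * g ij.2 =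
      ∑ ij ∈ antidiagonal n, binomialTransform f ij.1 * binomialTransform g ij.2 := by
  induction n generalizing f with
  | zero => simp
  | succ n ih =>
    have hconv : binomialTransform (fun i ↦ ∑ ij ∈ antidiagonal i, f ij.1 * g ij.2) (n + 1) =
        f 0 * binomialTransform g (n + 1) + ∑ i ∈ range (n + 1), (n + 1).choose (i + 1) *
          ∑ ij ∈ antidiagonal i, f (ij.1 + 1) * g ij.2 := by
      rw [binomialTransform_eq_add_sum, binomialTransform_eq_add_sum g]
      simp only [Nat.sum_antidiagonal_succ, Nat.antidiagonal_zero, sum_singleton, mul_add,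
        mul_sum, sum_add_distrib]
      ring_nf
    have hpascal : ∀ c : ℕ → ℕ, ∑ i ∈ range (n + 2), (n + 2).choose (i + 1) * c i =
        binomialTransform c (n + 1) + ∑ i ∈ range (n + 1), (n + 1).choose (i + 1) * c i := by
      intro c
      simp only [Nat.choose_succ_succ (n + 1), add_mul, sum_add_distrib, binomialTransform]
      rw [sum_range_succ (fun i ↦ (n + 1).choose (i + 1) * c i) (n + 1), Nat.choose_succ_self,
        zero_mul, add_zero]
    rw [hpascal, hconv, ih, ih (fun i ↦ f (i + 1)), Nat.sum_antidiagonal_succ]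
    simp only [binomialTransform_succ, binomialTransform_zero, add_mul, sum_add_distrib]
    ring

lemma binomialTransform_motzkin_add_two (n : ℕ) :
    binomialTransform motzkin (n + 2) = 2 * binomialTransform motzkin (n + 1) +
      ∑ ij ∈ antidiagonal n, binomialTransform motzkin ij.1 * binomialTransform motzkin ij.2 := by
  rw [binomialTransform_succ, ← sum_choose_succ_mul_sum_antidiagonal,
    binomialTransform_eq_add_sum (fun i ↦ motzkin (i + 1)), binomialTransform_eq_add_sum motzkin]
  simp only [motzkin_add_two, zero_add, motzkin_one, motzkin_zero, mul_add, sum_add_distrib]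
  ring

theorem binomialTransform_motzkin (n : ℕ) : binomialTransform motzkin n = catalan (n + 1) := by
  induction n using Nat.strong_induction_on with
  | _ n ih =>
    match n, ih with
    | 0, _ => simp
    | 1, _ => simp [binomialTransform, sum_range_succ, catalan_two]
    | n + 2, ih =>
      rw [binomialTransform_motzkin_add_two, catalan_add_three, ih (n + 1) (by omega)]
      congr 1
      refine sum_congr rfl fun ij hij ↦ ?_
      have := mem_antidiagonal.1 hij
      rw [ih ij.1 (by omega), ih ij.2 (by omega)]

theorem card_arcDiagrams_Icc_noncrossing (a b : ℕ) :
    #(arcDiagrams (Icc a b) (¬HasCrossing ·)) = catalan (b + 1 - a) := by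
  suffices ∀ n a b, b + 1 - a = n → #(arcDiagrams (Icc a b) (¬HasCrossing ·)) = catalan n from
    this _ a b rfl
  intro n
  induction n using Nat.strong_induction_on with
  | _ n ih =>
    intro a b hn
    rcases n with _ | n
    · rw [Icc_eq_empty (by omega), arcDiagrams_empty (by simp [HasCrossing]), card_singleton,
        catalan_zero]
    rw [card_arcDiagrams_Icc, ih n (by omega) (a + 1) b (by omega), catalan_succ',
      Nat.sum_antidiagonal_eq_sum_range_succ (fun i j ↦ catalan i * catalan j), sum_range_succ,
      Nat.sub_self, catalan_zero, mul_one, add_comm, ← Ico_add_one_add_one_eq_Ioc,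
      sum_Ico_eq_sum_range, show b + 1 - (a + 1) = n by omega]
    congr 1
    refine sum_congr rfl fun k hk ↦ ?_
    rw [mem_range] at hk
    rw [card_filter_mem_noncrossing (by omega) (by omega), ih k (by omega) _ _ (by omega),
      ih (n - k) (by omega) _ _ (by omega)]

theorem card_arcDiagrams_Icc_motzkin (a b : ℕ) :
    #(arcDiagrams (Icc a b) (fun A ↦ ¬HasCrossing A ∧ ¬HasTransient A)) = motzkin (b + 1 - a) := by
  suffices ∀ n a b, b + 1 - a = n →
      #(arcDiagrams (Icc a b) (fun A ↦ ¬HasCrossing A ∧ ¬HasTransient A)) = motzkin n from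
    this _ a b rfl
  intro n
  induction n using Nat.strong_induction_on with
  | _ n ih =>
    intro a b hn
    rcases n with _ | n
    · rw [Icc_eq_empty (by omega), arcDiagrams_empty (by simp [HasCrossing, HasTransient]),
        card_singleton, motzkin_zero]
    rw [card_arcDiagrams_Icc, ih n (by omega) (a + 1) b (by omega), motzkin_succ,
      ← Ico_add_one_add_one_eq_Ioc, sum_Ico_eq_sum_range, show b + 1 - (a + 1) = n by omega]
    congr 1
    refine sum_congr rfl fun k hk ↦ ?_
    rw [mem_range] at hk
    rw [card_filter_mem_motzkin (by omega) (by omega), ih k (by omega) _ _ (by omega),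
      ih (n - 1 - k) (by omega) _ _ (by omega)]

theorem card_finpartition_not_clCross (m : ℕ) :
    Nat.card {π : Finpartition (Icc 1 m) // ¬ClCross π 2} = catalan m := by
  simp_rw [Finpartition.clCross_two_iff]
  rw [card_finpartition_eq_card_arcDiagrams (Icc 1 m) (¬HasCrossing ·),
    card_arcDiagrams_Icc_noncrossing, Nat.add_sub_cancel]

theorem card_finpartition_not_enhCross (m : ℕ) :
    Nat.card {π : Finpartition (Icc 1 m) // ¬EnhCross π 2} = motzkin m := by
  simp_rw [Finpartition.enhCross_two_iff, not_or]
  rw [card_finpartition_eq_card_arcDiagrams (Icc 1 m) (fun A ↦ ¬HasCrossing A ∧ ¬HasTransient A),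
    card_arcDiagrams_Icc_motzkin, Nat.add_sub_cancel]

theorem stmt5 (n : ℕ) :
    Nat.card {π : Finpartition (Finset.Icc 1 (n+1)) // ¬ ClCross π 2} =
      ∑ i ∈ Finset.range (n+1), n.choose i *
        Nat.card {π : Finpartition (Finset.Icc 1 i) // ¬ EnhCross π 2} := by
  simp_rw [card_finpartition_not_clCross, card_finpartition_not_enhCross]
  exact (binomialTransform_motzkin n).symm
end

section
/- The map π ↦ π̂ is injective: if π and σ are partitions of (possibly different) subsets of [n] and π̂ = σ̂ as partitions of [n+1], then π = σ (including equality of their underlying subsets). -/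
lemma exists_arc_succ {s : Finset ℕ} (π : Finpartition s) {B : Finset ℕ} (hB : B ∈ π.parts)
    {a : ℕ} (ha : a ∈ B) (h : ∃ c ∈ B, a < c) : ∃ b ∈ B, IsArc π a b := by
  classical
  obtain ⟨c, hc, hac⟩ := h
  have hT : (B.filter (a < ·)).Nonempty := ⟨c, Finset.mem_filter.2 ⟨hc, hac⟩⟩
  set b := (B.filter (a < ·)).min' hT with hbdef
  have hbm := Finset.min'_mem _ hT
  rw [Finset.mem_filter] at hbm
  refine ⟨b, hbm.1, hbm.2, B, hB, ha, hbm.1, ?_⟩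
  rintro x hx ⟨h1, h2⟩
  have : b ≤ x := Finset.min'_le (B.filter (a < ·)) x (Finset.mem_filter.2 ⟨hx, h1⟩)
  omega

lemma exists_arc_pred {s : Finset ℕ} (π : Finpartition s) {B : Finset ℕ} (hB : B ∈ π.parts)
    {x : ℕ} (hx : x ∈ B) (h : ∃ p ∈ B, p < x) : ∃ p ∈ B, IsArc π p x := by
  classical
  obtain ⟨c, hc, hcx⟩ := h
  have hT : (B.filter (· < x)).Nonempty := ⟨c, Finset.mem_filter.2 ⟨hc, hcx⟩⟩
  set p := (B.filter (· < x)).max' hT with hpdef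
  have hpm := Finset.max'_mem _ hT
  rw [Finset.mem_filter] at hpm
  refine ⟨p, hpm.1, hpm.2, B, hB, hpm.1, hx, ?_⟩
  rintro z hz ⟨h1, h2⟩
  have : z ≤ p := Finset.le_max' (B.filter (· < x)) z (Finset.mem_filter.2 ⟨hz, h2⟩)
  omega

lemma block_subset {s t : Finset ℕ} {π : Finpartition s} {σ : Finpartition t}
    (harc : ∀ a b, IsArc π a b → IsArc σ a b)
    {B B' : Finset ℕ} (hB : B ∈ π.parts) (hB' : B' ∈ σ.parts)
    (hne : B.Nonempty) (hmin : B.min' hne ∈ B') : B ⊆ B' := by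
  have main : ∀ x, x ∈ B → x ∈ B' := by
    intro x
    induction x using Nat.strong_induction_on with
    | _ x IH =>
      intro hx
      by_cases hxm : x = B.min' hne
      · exact hxm ▸ hmin
      · have hlt : B.min' hne < x :=
          lt_of_le_of_ne (Finset.min'_le _ _ hx) (Ne.symm hxm)
        obtain ⟨p, hp, harcpx⟩ :=
          exists_arc_pred π hB hx ⟨_, B.min'_mem hne, hlt⟩
        obtain ⟨hplt, C, hC, hpC, hxC, -⟩ := harc p x harcpx
        have hpB' : B' = C := σ.eq_of_mem_parts hB' hC (IH p hplt hp) hpC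
        exact hpB' ▸ hxC
  exact fun x hx => main x hx

lemma parts_subset {s t : Finset ℕ} (π : Finpartition s) (σ : Finpartition t)
    (harc : ∀ a b, IsArc π a b ↔ IsArc σ a b)
    (hsing : ∀ u, {u} ∈ π.parts → {u} ∈ σ.parts) : π.parts ⊆ σ.parts := by
  intro B hB
  have hne : B.Nonempty := π.nonempty_of_mem_parts hB
  set m := B.min' hne with hm
  by_cases hsgl : B = {m}
  · rw [hsgl]; exact hsing m (hsgl ▸ hB)
  · obtain ⟨c, hc, hmc⟩ : ∃ c ∈ B, m < c := by
      by_contra hcon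
      push_neg at hcon
      exact hsgl (Finset.eq_singleton_iff_unique_mem.2
        ⟨B.min'_mem hne, fun x hx => le_antisymm (hcon x hx) (Finset.min'_le _ _ hx)⟩)
    obtain ⟨b, hbB, harcmb⟩ := exists_arc_succ π hB (B.min'_mem hne) ⟨c, hc, hmc⟩
    obtain ⟨-, B', hB', hmB', -, -⟩ := (harc m b).1 harcmb
    have h1 : B ⊆ B' := block_subset (fun a b h => (harc a b).1 h) hB hB' hne hmB'
    have hnolow : ∀ y ∈ B', ¬ y < m := by
      intro y hy hym
      obtain ⟨p, hpB', harcpm⟩ := exists_arc_pred σ hB' hmB' ⟨y, hy, hym⟩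
      obtain ⟨hplt, C, hC, hpC, hmC, -⟩ := (harc p m).2 harcpm
      have : C = B := π.eq_of_mem_parts hC hB hmC (B.min'_mem hne)
      have : p ∈ B := this ▸ hpC
      exact absurd (Finset.min'_le _ _ this) (by omega)
    have hne' : B'.Nonempty := ⟨m, hmB'⟩
    have hminB' : B'.min' hne' = m :=
      le_antisymm (Finset.min'_le _ _ hmB')
        (le_of_not_gt (hnolow _ (Finset.min'_mem _ hne')))
    have h2 : B' ⊆ B :=
      block_subset (fun a b h => (harc a b).2 h) hB' hB hne'
        (hminB' ▸ B.min'_mem hne)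
    have : B = B' := Finset.Subset.antisymm h1 h2
    exact this ▸ hB'

theorem stmt6 (n : ℕ) {s t : Finset ℕ} (hs : s ⊆ Finset.Icc 1 n) (ht : t ⊆ Finset.Icc 1 n)
    (π : Finpartition s) (σ : Finpartition t) (ρ : Finpartition (Finset.Icc 1 (n+1)))
    (h1 : HatRel π ρ) (h2 : HatRel σ ρ) :
    s = t ∧ π.parts = σ.parts := by
  have harc : ∀ a b, IsArc π a b ↔ IsArc σ a b := by
    intro a b
    constructor
    · intro h
      have hρ : IsArc ρ a (b+1) := (h1 a (b+1)).2 (Or.inl ⟨a, b, h, rfl, rfl⟩)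
      rcases (h2 a (b+1)).1 hρ with ⟨v, w, hvw, rfl, hb⟩ | ⟨_, hb⟩
      · have hbw : b = w := by omega
        exact hbw ▸ hvw
      · exact absurd h.1 (by omega)
    · intro h
      have hρ : IsArc ρ a (b+1) := (h2 a (b+1)).2 (Or.inl ⟨a, b, h, rfl, rfl⟩)
      rcases (h1 a (b+1)).1 hρ with ⟨v, w, hvw, rfl, hb⟩ | ⟨_, hb⟩
      · have hbw : b = w := by omega
        exact hbw ▸ hvw
      · exact absurd h.1 (by omega)
  have hsing : ∀ u, {u} ∈ π.parts ↔ {u} ∈ σ.parts := by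
    intro u
    constructor
    · intro h
      have hρ : IsArc ρ u (u+1) := (h1 u (u+1)).2 (Or.inr ⟨h, rfl⟩)
      rcases (h2 u (u+1)).1 hρ with ⟨v, w, hvw, rfl, hb⟩ | ⟨hu, -⟩
      · exact absurd hvw.1 (by omega)
      · exact hu
    · intro h
      have hρ : IsArc ρ u (u+1) := (h2 u (u+1)).2 (Or.inr ⟨h, rfl⟩)
      rcases (h1 u (u+1)).1 hρ with ⟨v, w, hvw, rfl, hb⟩ | ⟨hu, -⟩
      · exact absurd hvw.1 (by omega)
      · exact hu
  have hparts : π.parts = σ.parts :=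
    Finset.Subset.antisymm
      (parts_subset π σ harc (fun u => (hsing u).1))
      (parts_subset σ π (fun a b => (harc a b).symm) (fun u => (hsing u).2))
  refine ⟨?_, hparts⟩
  rw [← π.sup_parts, ← σ.sup_parts, hparts]
end

section
/- The map π ↦ π̂ is surjective onto partitions of [n+1]: every set partition σ of [n+1] equals π̂ for some partition π of a subset of [n], where π is obtained by taking, for each arc (x,y) of σ, the singleton x of π if y = x+1, and the arc (x, y-1) of π otherwise. -/
open scoped Classical

namespace Stmt7aux

variable {n : ℕ} (σ : Finpartition (Finset.Icc 1 (n+1)))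

lemma succ_unique {s : Finset ℕ} {π : Finpartition s} {x y y'} (h : IsArc π x y)
    (h' : IsArc π x y') : y = y' := by
  obtain ⟨hxy, B, hB, hxB, hyB, hbet⟩ := h
  obtain ⟨hxy', B', hB', hxB', hyB', hbet'⟩ := h'
  obtain rfl : B = B' := π.eq_of_mem_parts hB hB' hxB hxB'
  by_contra hne
  rcases lt_or_gt_of_ne hne with h1 | h1
  · exact hbet' y hyB ⟨hxy, h1⟩
  · exact hbet y' hyB' ⟨hxy', h1⟩

lemma pred_unique {s : Finset ℕ} {π : Finpartition s} {x x' y} (h : IsArc π x y)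
    (h' : IsArc π x' y) : x = x' := by
  obtain ⟨hxy, B, hB, hxB, hyB, hbet⟩ := h
  obtain ⟨hxy', B', hB', hxB', hyB', hbet'⟩ := h'
  obtain rfl : B = B' := π.eq_of_mem_parts hB hB' hyB hyB'
  by_contra hne
  rcases lt_or_gt_of_ne hne with h1 | h1
  · exact hbet x' hxB' ⟨h1, hxy'⟩
  · exact hbet' x hxB ⟨h1, hxy⟩

lemma arc_mem_left {x y} (h : IsArc σ x y) : x ∈ Finset.Icc 1 (n+1) := by
  obtain ⟨_, B, hB, hxB, _, _⟩ := h
  exact σ.le hB hxB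

lemma arc_mem_right {x y} (h : IsArc σ x y) : y ∈ Finset.Icc 1 (n+1) := by
  obtain ⟨_, B, hB, _, hyB, _⟩ := h
  exact σ.le hB hyB

noncomputable def p (y : ℕ) : ℕ :=
  if h : ∃ x, x < y ∧ IsArc σ x (y+1) then h.choose else y

lemma p_le (y : ℕ) : p σ y ≤ y := by
  unfold p
  split
  · next h => exact le_of_lt h.choose_spec.1
  · exact le_rfl

lemma p_arc {y : ℕ} (h : p σ y < y) : IsArc σ (p σ y) (y+1) := by
  by_cases hex : ∃ x, x < y ∧ IsArc σ x (y+1)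
  · rw [p, dif_pos hex]
    exact hex.choose_spec.2
  · rw [p, dif_neg hex] at h
    omega

lemma arc_p {x y : ℕ} (h : IsArc σ x (y+1)) (hxy : x < y) : p σ y = x := by
  have hex : ∃ x, x < y ∧ IsArc σ x (y+1) := ⟨x, hxy, h⟩
  unfold p
  rw [dif_pos hex]
  exact pred_unique hex.choose_spec.2 h

noncomputable def rep : ℕ → ℕ := fun y =>
  if h : p σ y < y then rep (p σ y) else y
termination_by y => y
decreasing_by exact h

lemma rep_eq (y : ℕ) : rep σ y = if p σ y < y then rep σ (p σ y) else y := by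
  rw [rep, dite_eq_ite]

lemma rep_of_lt {y : ℕ} (h : p σ y < y) : rep σ y = rep σ (p σ y) := by
  rw [rep_eq, if_pos h]

lemma rep_of_eq {y : ℕ} (h : ¬ p σ y < y) : rep σ y = y := by
  rw [rep_eq, if_neg h]

def Reaches (a b : ℕ) : Prop := ∃ k, (p σ)^[k] a = b

lemma reaches_refl (a : ℕ) : Reaches σ a a := ⟨0, rfl⟩

lemma reaches_step {a b : ℕ} (h : Reaches σ (p σ a) b) : Reaches σ a b := by
  obtain ⟨k, hk⟩ := h
  exact ⟨k+1, by rw [Function.iterate_succ_apply]; exact hk⟩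

lemma iterate_le (k a : ℕ) : (p σ)^[k] a ≤ a := by
  induction k with
  | zero => exact le_rfl
  | succ k ih => rw [Function.iterate_succ_apply']; exact le_trans (p_le σ _) ih

lemma reaches_le {a b : ℕ} (h : Reaches σ a b) : b ≤ a := by
  obtain ⟨k, hk⟩ := h; rw [← hk]; exact iterate_le σ k a

lemma reaches_rep (a : ℕ) : Reaches σ a (rep σ a) := by
  induction a using Nat.strong_induction_on with
  | _ a ih =>
    by_cases h : p σ a < a
    · rw [rep_of_lt σ h]; exact reaches_step σ (ih _ h)
    · rw [rep_of_eq σ h]; exact reaches_refl σ a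

lemma p_fix_of_not_lt' {y : ℕ} (h : ¬ p σ y < y) : p σ y = y :=
  le_antisymm (p_le σ y) (not_lt.1 h)

lemma rep_iterate (k : ℕ) : ∀ a, rep σ a = rep σ ((p σ)^[k] a) := by
  induction k with
  | zero => intro a; rfl
  | succ k ih =>
    intro a
    rw [Function.iterate_succ_apply]
    by_cases hp : p σ a < a
    · rw [rep_of_lt σ hp]; exact ih _
    · rw [p_fix_of_not_lt' σ hp]; exact ih a

lemma rep_of_reaches {a b : ℕ} (h : Reaches σ a b) : rep σ a = rep σ b := by
  obtain ⟨k, hk⟩ := h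
  rw [rep_iterate σ k a, hk]

lemma p_inj {z₁ z₂ : ℕ} (h1 : p σ z₁ < z₁) (h2 : p σ z₂ < z₂) (he : p σ z₁ = p σ z₂) :
    z₁ = z₂ := by
  have a1 := p_arc σ h1
  have a2 := p_arc σ h2
  rw [he] at a1
  have := succ_unique a1 a2
  omega

lemma p_fix_of_not_lt {y : ℕ} (h : ¬ p σ y < y) : p σ y = y :=
  le_antisymm (p_le σ y) (not_lt.1 h)

/-- If `a` reaches `p b` and `p b < b` then `a = p b` or `a`'s chain passes through `b`. -/
lemma reach_through {b : ℕ} (hb : p σ b < b) :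
    ∀ k a, (p σ)^[k] a = p σ b → a = p σ b ∨ Reaches σ a b := by
  intro k
  induction k with
  | zero => intro a h; exact Or.inl h
  | succ k ih =>
    intro a h
    rw [Function.iterate_succ_apply'] at h
    set u := (p σ)^[k] a with hu
    by_cases hlt : p σ u < u
    · have := p_inj σ hlt hb h
      exact Or.inr ⟨k, by rw [← hu, this]⟩
    · rw [p_fix_of_not_lt σ hlt] at h
      exact ih a h

lemma reaches_comparable {r : ℕ} :
    ∀ N a b, a + b ≤ N → Reaches σ a r → Reaches σ b r →
      Reaches σ a b ∨ Reaches σ b a := by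
  intro N
  induction N with
  | zero =>
    intro a b hab _ _
    have ha0 : a = 0 := by omega
    have hb0 : b = 0 := by omega
    subst ha0; subst hb0
    exact Or.inl (reaches_refl σ 0)
  | succ N ih =>
    intro a b hab ha hb
    rcases eq_or_ne a b with rfl | hne
    · exact Or.inl (reaches_refl σ a)
    -- wlog trickery: handle both orders symmetrically
    rcases lt_or_gt_of_ne hne with hlt | hlt
    · -- a < b
      have hrb : r ≤ a := reaches_le σ ha
      have hpb : p σ b < b := by
        by_contra hc
        have hfix := p_fix_of_not_lt σ hc
        obtain ⟨k, hk⟩ := hb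
        have : (p σ)^[k] b = b := by
          induction k with
          | zero => rfl
          | succ k ih2 => rw [Function.iterate_succ_apply, hfix]; exact ih2 (by
              rw [Function.iterate_succ_apply, hfix] at hk; exact hk)
        omega
      have hpbr : Reaches σ (p σ b) r := by
        obtain ⟨k, hk⟩ := hb
        cases k with
        | zero => simp at hk; omega
        | succ k => exact ⟨k, by rw [Function.iterate_succ_apply] at hk; exact hk⟩
      have := ih a (p σ b) (by omega) ha hpbr
      rcases this with h1 | h1
      · obtain ⟨k, hk⟩ := h1
        rcases reach_through σ hpb k a hk with h2 | h2
        · exact Or.inr (reaches_step σ (h2 ▸ reaches_refl σ _))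
        · exact Or.inl h2
      · exact Or.inr (reaches_step σ h1)
    · -- b < a : symmetric
      have hpa : p σ a < a := by
        by_contra hc
        have hfix := p_fix_of_not_lt σ hc
        obtain ⟨k, hk⟩ := ha
        have : (p σ)^[k] a = a := by
          induction k with
          | zero => rfl
          | succ k ih2 => rw [Function.iterate_succ_apply, hfix]; exact ih2 (by
              rw [Function.iterate_succ_apply, hfix] at hk; exact hk)
        have hra : r ≤ b := reaches_le σ hb
        omega
      have hpar : Reaches σ (p σ a) r := by
        obtain ⟨k, hk⟩ := ha
        cases k with
        | zero =>
          simp at hk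
          have hra : r ≤ b := reaches_le σ hb
          omega
        | succ k => exact ⟨k, by rw [Function.iterate_succ_apply] at hk; exact hk⟩
      have := ih (p σ a) b (by omega) hpar hb
      rcases this with h1 | h1
      · exact Or.inl (reaches_step σ h1)
      · obtain ⟨k, hk⟩ := h1
        rcases reach_through σ hpa k b hk with h2 | h2
        · exact Or.inl (reaches_step σ (h2 ▸ reaches_refl σ _))
        · exact Or.inr h2

lemma reaches_of_rep_eq {a b : ℕ} (h : rep σ a = rep σ b) :
    Reaches σ a b ∨ Reaches σ b a := by
  have ha := reaches_rep σ a
  have hb := reaches_rep σ b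
  rw [h] at ha
  exact reaches_comparable σ (a + b) a b le_rfl ha hb

/-- Extraction of the last step of a nontrivial chain. -/
lemma pred_extract_aux (x : ℕ) : ∀ k z, (p σ)^[k] z = x → z ≠ x →
    ∃ u, p σ u = x ∧ x < u ∧ u ≤ z := by
  intro k
  induction k with
  | zero => intro z hk hne; exact absurd hk hne
  | succ k ih =>
    intro z hk hne
    rw [Function.iterate_succ_apply] at hk
    rcases eq_or_ne (p σ z) z with he | he
    · rw [he] at hk; exact ih z hk hne
    · have hlt : p σ z < z := lt_of_le_of_ne (p_le σ z) he
      rcases eq_or_ne (p σ z) x with he2 | he2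
      · refine ⟨z, he2, ?_, le_rfl⟩
        omega
      · obtain ⟨u, hu1, hu2, hu3⟩ := ih _ hk he2
        exact ⟨u, hu1, hu2, le_trans hu3 (le_of_lt hlt)⟩

lemma pred_extract {z x : ℕ} (h : Reaches σ z x) (hne : z ≠ x) :
    ∃ u, p σ u = x ∧ x < u ∧ u ≤ z := by
  obtain ⟨k, hk⟩ := h
  exact pred_extract_aux σ x k z hk hne


noncomputable def gs : Finset ℕ :=
  (Finset.Icc 1 n).filter (fun x => (∃ y, IsArc σ x y) ∨ (∃ z, IsArc σ z (x+1)))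

lemma gs_subset : gs σ ⊆ Finset.Icc 1 n := Finset.filter_subset _ _

lemma mem_gs_left {x y : ℕ} (h : IsArc σ x y) : x ∈ gs σ := by
  have h1 := arc_mem_left σ h
  have h2 := arc_mem_right σ h
  rw [Finset.mem_Icc] at h1 h2
  refine Finset.mem_filter.2 ⟨Finset.mem_Icc.2 ⟨h1.1, ?_⟩, Or.inl ⟨y, h⟩⟩
  have := h.1
  omega

lemma mem_gs_right {x y : ℕ} (h : IsArc σ x y) : y - 1 ∈ gs σ := by
  have h1 := arc_mem_left σ h
  have h2 := arc_mem_right σ h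
  rw [Finset.mem_Icc] at h1 h2
  have h3 := h.1
  have hy : y - 1 + 1 = y := by omega
  refine Finset.mem_filter.2 ⟨Finset.mem_Icc.2 ⟨by omega, by omega⟩, Or.inr ⟨x, ?_⟩⟩
  rwa [hy]

lemma rep_arc {x y : ℕ} (h : IsArc σ x y) : rep σ (y - 1) = rep σ x := by
  rcases eq_or_ne y (x+1) with rfl | hne
  · simp
  · have hx1 : 1 ≤ x := by
      have := Finset.mem_Icc.1 (arc_mem_left σ h); exact this.1
    have hxy : x < y - 1 := by have := h.1; omega
    have harc : IsArc σ x ((y-1)+1) := by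
      rwa [show y - 1 + 1 = y by have := h.1; omega]
    have hp : p σ (y-1) = x := arc_p σ harc hxy
    rw [rep_of_lt σ (by rw [hp]; exact hxy), hp]

noncomputable def fiber (a : ℕ) : Finset ℕ := (gs σ).filter (fun z => rep σ z = rep σ a)

lemma mem_fiber {a z : ℕ} : z ∈ fiber σ a ↔ z ∈ gs σ ∧ rep σ z = rep σ a :=
  Finset.mem_filter

lemma fiber_congr {a b : ℕ} (h : rep σ a = rep σ b) : fiber σ a = fiber σ b := by
  ext z
  rw [mem_fiber, mem_fiber, h]

noncomputable def hatInv : Finpartition (gs σ) where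
  parts := (gs σ).image (fun a => fiber σ a)
  supIndep := by
    rw [Finset.supIndep_iff_pairwiseDisjoint]
    intro B hB C hC hne
    rw [Finset.mem_coe, Finset.mem_image] at hB hC
    obtain ⟨a, _, rfl⟩ := hB
    obtain ⟨c, _, rfl⟩ := hC
    show Disjoint (fiber σ a) (fiber σ c)
    rw [Finset.disjoint_left]
    intro z hz1 hz2
    rw [mem_fiber] at hz1 hz2
    exact hne (fiber_congr σ (hz1.2 ▸ hz2.2))
  sup_parts := by
    ext z
    rw [Finset.mem_sup]
    constructor
    · rintro ⟨B, hB, hz⟩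
      obtain ⟨a, _, rfl⟩ := Finset.mem_image.1 hB
      exact ((mem_fiber σ).1 hz).1
    · intro hz
      exact ⟨fiber σ z, Finset.mem_image_of_mem _ hz, (mem_fiber σ).2 ⟨hz, rfl⟩⟩
  bot_notMem := by
    intro h
    obtain ⟨a, ha, he⟩ := Finset.mem_image.1 h
    have : a ∈ fiber σ a := (mem_fiber σ).2 ⟨ha, rfl⟩
    rw [he] at this
    exact absurd this (Finset.notMem_empty a)

lemma mem_parts_iff {B : Finset ℕ} :
    B ∈ (hatInv σ).parts ↔ ∃ a ∈ gs σ, fiber σ a = B := by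
  constructor
  · intro h; exact Finset.mem_image.1 h
  · intro h; exact Finset.mem_image.2 h

lemma iterate_fix {w : ℕ} (hfix : p σ w = w) (k : ℕ) : (p σ)^[k] w = w := by
  induction k with
  | zero => rfl
  | succ k ih => rw [Function.iterate_succ_apply, hfix]; exact ih

lemma reaches_fix {w v : ℕ} (hfix : p σ w = w) (h : Reaches σ w v) : v = w := by
  obtain ⟨k, hk⟩ := h
  rw [iterate_fix σ hfix k] at hk
  exact hk.symm

/-- K1 : arcs of the constructed partition come from arcs of σ. -/
lemma arc_hatInv {v w : ℕ} (h : IsArc (hatInv σ) v w) : IsArc σ v (w+1) := by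
  obtain ⟨hvw, B, hB, hvB, hwB, hbet⟩ := h
  obtain ⟨a, _, rfl⟩ := (mem_parts_iff σ).1 hB
  rw [mem_fiber] at hvB hwB
  have hrep : rep σ w = rep σ v := hwB.2.trans hvB.2.symm
  have hre : Reaches σ w v := by
    rcases reaches_of_rep_eq σ hrep.symm with h1 | h1
    · have := reaches_le σ h1; omega
    · exact h1
  have hpw : p σ w < w := by
    rcases lt_or_eq_of_le (p_le σ w) with h1 | h1
    · exact h1
    · have := reaches_fix σ h1 hre; omega
  have harc := p_arc σ hpw
  rcases eq_or_ne (p σ w) v with he | he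
  · rwa [he] at harc
  · exfalso
    have hre2 : Reaches σ (p σ w) v := by
      obtain ⟨k, hk⟩ := hre
      cases k with
      | zero => simp at hk; omega
      | succ k => exact ⟨k, by rw [Function.iterate_succ_apply] at hk; exact hk⟩
    have hvp : v < p σ w := lt_of_le_of_ne (reaches_le σ hre2) (Ne.symm he)
    refine hbet (p σ w) ?_ ⟨hvp, hpw⟩
    rw [mem_fiber]
    refine ⟨mem_gs_left σ harc, ?_⟩
    rw [← rep_of_lt σ hpw, hwB.2]

/-- rep is the identity on elements whose σ-successor is adjacent. -/
lemma rep_eq_self_of_adj {x : ℕ} (h : IsArc σ x (x+1)) : rep σ x = x := by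
  have hfix : ¬ p σ x < x := by
    intro hc
    have := pred_unique (p_arc σ hc) h
    omega
  exact rep_of_eq σ hfix

lemma fiber_singleton_of_adj {x : ℕ} (h : IsArc σ x (x+1)) : fiber σ x = {x} := by
  ext z
  rw [mem_fiber, Finset.mem_singleton]
  constructor
  · rintro ⟨hz, hrep⟩
    rw [rep_eq_self_of_adj σ h] at hrep
    by_contra hne
    have hre : Reaches σ z x := by
      have := reaches_rep σ z
      rwa [hrep] at this
    obtain ⟨u, hu1, hu2, _⟩ := pred_extract σ hre hne
    have harc := p_arc σ (by rw [hu1]; exact hu2)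
    rw [hu1] at harc
    have := succ_unique harc h
    omega
  · rintro rfl
    exact ⟨mem_gs_left σ h, rfl⟩

/-- K3 -/
lemma singleton_mem_of_adj {x : ℕ} (h : IsArc σ x (x+1)) : {x} ∈ (hatInv σ).parts :=
  (mem_parts_iff σ).2 ⟨x, mem_gs_left σ h, fiber_singleton_of_adj σ h⟩

/-- K2 -/
lemma adj_of_singleton_mem {x : ℕ} (h : {x} ∈ (hatInv σ).parts) : IsArc σ x (x+1) := by
  obtain ⟨a, _, he⟩ := (mem_parts_iff σ).1 h
  have hx : x ∈ fiber σ a := by rw [he]; exact Finset.mem_singleton_self x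
  rw [mem_fiber] at hx
  have hfx : fiber σ x = {x} := by rw [fiber_congr σ hx.2, he]
  have hgs := hx.1
  simp only [gs, Finset.mem_filter] at hgs
  rcases hgs.2 with ⟨y, hy⟩ | ⟨w, hw⟩
  · rcases eq_or_ne y (x+1) with rfl | hne
    · exact hy
    · exfalso
      have h1 : y - 1 ∈ fiber σ x := (mem_fiber σ).2 ⟨mem_gs_right σ hy, rep_arc σ hy⟩
      rw [hfx, Finset.mem_singleton] at h1
      have := hy.1
      omega
  · rcases eq_or_ne w x with rfl | hne
    · exact hw
    · exfalso
      have hwx : w < x := by have := hw.1; omega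
      have hp : p σ x = w := arc_p σ hw hwx
      have hrw : rep σ x = rep σ w := by
        rw [rep_of_lt σ (by rw [hp]; exact hwx), hp]
      have h1 : w ∈ fiber σ x := (mem_fiber σ).2 ⟨mem_gs_left σ hw, hrw.symm⟩
      rw [hfx, Finset.mem_singleton] at h1
      exact hne h1

/-- K4 -/
lemma arc_of_arc_nonadj {x y : ℕ} (h : IsArc σ x y) (hne : y ≠ x + 1) :
    IsArc (hatInv σ) x (y - 1) := by
  have hxy : x < y - 1 := by have := h.1; omega
  have hx1 : 1 ≤ x := (Finset.mem_Icc.1 (arc_mem_left σ h)).1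
  refine ⟨hxy, fiber σ x, (mem_parts_iff σ).2 ⟨x, mem_gs_left σ h, rfl⟩,
    (mem_fiber σ).2 ⟨mem_gs_left σ h, rfl⟩,
    (mem_fiber σ).2 ⟨mem_gs_right σ h, rep_arc σ h⟩, ?_⟩
  intro z hz ⟨hz1, hz2⟩
  rw [mem_fiber] at hz
  have hre : Reaches σ z x := by
    rcases reaches_of_rep_eq σ hz.2 with h1 | h1
    · exact h1
    · have := reaches_le σ h1; omega
  obtain ⟨u, hu1, hu2, hu3⟩ := pred_extract σ hre (by omega)
  have harc := p_arc σ (by rw [hu1]; exact hu2)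
  rw [hu1] at harc
  have := succ_unique harc h
  omega

end Stmt7aux


theorem stmt7 (n : ℕ) (σ : Finpartition (Finset.Icc 1 (n+1))) :
    ∃ (s : Finset ℕ) (_ : s ⊆ Finset.Icc 1 n) (π : Finpartition s), HatRel π σ ∧
      ∀ x y, IsArc σ x y →
        (y = x + 1 → {x} ∈ π.parts) ∧ (y ≠ x + 1 → IsArc π x (y - 1)) := by
  classical
  refine ⟨Stmt7aux.gs σ, Stmt7aux.gs_subset σ, Stmt7aux.hatInv σ, ?_, ?_⟩
  · intro x y
    constructor
    · intro h
      rcases eq_or_ne y (x+1) with rfl | hne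
      · exact Or.inr ⟨Stmt7aux.singleton_mem_of_adj σ h, rfl⟩
      · refine Or.inl ⟨x, y-1, Stmt7aux.arc_of_arc_nonadj σ h hne, rfl, ?_⟩
        have := h.1; omega
    · rintro (⟨v, w, hvw, rfl, rfl⟩ | ⟨hx, rfl⟩)
      · exact Stmt7aux.arc_hatInv σ hvw
      · exact Stmt7aux.adj_of_singleton_mem σ hx
  · intro x y h
    exact ⟨fun he => Stmt7aux.singleton_mem_of_adj σ (he ▸ h),
           fun hne => Stmt7aux.arc_of_arc_nonadj σ h hne⟩
end

section
/- For every n ≥ 0 and k ≥ 1, there is a bijection between the set of pairs (S, π), where S ⊆ [n] and π is a partition of S with no enhanced k-crossing, and the set of partitions of [n+1] with no classical k-crossing. -/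
open Finset

namespace Stmt8

/-- A classical arc system on ground set `t`. -/
def SysOk (t : Finset ℕ) (A : Finset (ℕ × ℕ)) : Prop :=
  (∀ p ∈ A, p.1 ∈ t ∧ p.2 ∈ t ∧ p.1 < p.2) ∧
  (∀ p ∈ A, ∀ q ∈ A, p.1 = q.1 → p = q) ∧
  (∀ p ∈ A, ∀ q ∈ A, p.2 = q.2 → p = q)

def Step (A : Finset (ℕ × ℕ)) (x y : ℕ) : Prop := (x, y) ∈ A

abbrev Reach (A : Finset (ℕ × ℕ)) : ℕ → ℕ → Prop := Relation.ReflTransGen (Step A)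

def Rel (A : Finset (ℕ × ℕ)) (x y : ℕ) : Prop := Reach A x y ∨ Reach A y x

variable {t : Finset ℕ} {A : Finset (ℕ × ℕ)} {x y z a b : ℕ}

lemma reach_le (hA : SysOk t A) (h : Reach A x y) : x ≤ y := by
  induction h with
  | refl => exact le_rfl
  | tail _ hstep ih => exact ih.trans (hA.1 _ hstep).2.2.le

lemma lemU (hA : SysOk t A) (h1 : Reach A y x) : ∀ z, Reach A y z →
    Reach A x z ∨ Reach A z x := by
  induction h1 using Relation.ReflTransGen.head_induction_on with
  | refl => exact fun z hz => Or.inl hz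
  | head hstep hrest ih =>
    rename_i c d
    intro z hz
    rcases hz.cases_head with rfl | ⟨w', hw', hrest'⟩
    · exact Or.inr (Relation.ReflTransGen.head hstep hrest)
    · have : (c, d) = (c, w') := hA.2.1 _ hstep _ hw' rfl
      cases this
      exact ih z hrest'

lemma lemD (hA : SysOk t A) (h1 : Reach A x y) : ∀ z, Reach A z y →
    Reach A x z ∨ Reach A z x := by
  induction h1 with
  | refl => exact fun z hz => Or.inr hz
  | tail hxb hstep ih =>
    rename_i b c
    intro z hz
    rcases hz.cases_tail with rfl | ⟨w', hw', hstep'⟩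
    · exact Or.inl (hxb.tail hstep)
    · have : (b, c) = (w', c) := hA.2.2 _ hstep _ hstep' rfl
      cases this
      exact ih z hw'

lemma rel_refl : Rel A x x := Or.inl Relation.ReflTransGen.refl

lemma rel_symm (h : Rel A x y) : Rel A y x := h.symm

lemma rel_trans (hA : SysOk t A) (h1 : Rel A x y) (h2 : Rel A y z) : Rel A x z := by
  rcases h1 with h1 | h1 <;> rcases h2 with h2 | h2
  · exact Or.inl (h1.trans h2)
  · exact lemD hA h1 z h2
  · rcases lemU hA h1 z h2 with h | h
    · exact Or.inl h
    · exact Or.inr h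
  · exact Or.inr (h2.trans h1)

/-- The block of `x`. -/
noncomputable def cls (A : Finset (ℕ × ℕ)) (t : Finset ℕ) (x : ℕ) : Finset ℕ :=
  @Finset.filter _ (Rel A x) (Classical.decPred _) t

lemma mem_cls : y ∈ cls A t x ↔ y ∈ t ∧ Rel A x y := by
  simp [cls, Finset.mem_filter]

lemma cls_eq_of_rel (hA : SysOk t A) (h : Rel A x y) : cls A t x = cls A t y := by
  ext z
  simp only [mem_cls]
  exact ⟨fun ⟨hz, hr⟩ => ⟨hz, rel_trans hA (rel_symm h) hr⟩,
    fun ⟨hz, hr⟩ => ⟨hz, rel_trans hA h hr⟩⟩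

/-- The partition induced by an arc system. -/
noncomputable def ofSys (t : Finset ℕ) (A : Finset (ℕ × ℕ)) (hA : SysOk t A) :
    Finpartition t where
  parts := t.image (cls A t)
  supIndep := by
    rw [Finset.supIndep_iff_pairwiseDisjoint]
    rintro B hB C hC hne
    simp only [Finset.coe_image, Set.mem_image, Finset.mem_coe] at hB hC
    obtain ⟨u, hu, rfl⟩ := hB
    obtain ⟨v, hv, rfl⟩ := hC
    simp only [Function.onFun, id]
    rw [Finset.disjoint_left]
    intro w hw hw'
    rw [mem_cls] at hw hw'
    exact hne (cls_eq_of_rel hA (rel_trans hA hw.2 (rel_symm hw'.2)))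
  sup_parts := by
    apply le_antisymm
    · rw [Finset.sup_le_iff]
      intro B hB
      simp only [Finset.mem_image] at hB
      obtain ⟨u, _, rfl⟩ := hB
      exact fun y hy => (mem_cls.1 hy).1
    · intro u hu
      rw [Finset.mem_sup]
      exact ⟨cls A t u, Finset.mem_image_of_mem _ hu, mem_cls.2 ⟨hu, rel_refl⟩⟩
  bot_notMem := by
    simp only [Finset.bot_eq_empty, Finset.mem_image]
    rintro ⟨u, hu, he⟩
    have : u ∈ cls A t u := mem_cls.2 ⟨hu, rel_refl⟩
    rw [he] at this
    exact absurd this (Finset.notMem_empty u)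

lemma mem_parts_ofSys {hA : SysOk t A} {B : Finset ℕ} :
    B ∈ (ofSys t A hA).parts ↔ ∃ x ∈ t, cls A t x = B := by
  simp [ofSys]

lemma isArc_ofSys (hA : SysOk t A) :
    IsArc (ofSys t A hA) a b ↔ (a, b) ∈ A := by
  constructor
  · rintro ⟨hab, B, hB, haB, hbB, hbetween⟩
    rw [mem_parts_ofSys] at hB
    obtain ⟨x, hx, rfl⟩ := hB
    rw [mem_cls] at haB hbB
    have hrel : Rel A a b := rel_trans hA (rel_symm haB.2) hbB.2
    have hreach : Reach A a b := by
      rcases hrel with h | h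
      · exact h
      · exact absurd (reach_le hA h) (by omega)
    rcases hreach.cases_head with heq | ⟨w, hw, hrest⟩
    · omega
    · -- hw : Step A a w
      have hwb : w ≤ b := reach_le hA hrest
      have haw : a < w := (hA.1 _ hw).2.2
      rcases eq_or_lt_of_le hwb with rfl | hwb'
      · exact hw
      · exfalso
        refine hbetween w ?_ ⟨haw, hwb'⟩
        exact mem_cls.2 ⟨(hA.1 _ hw).2.1, rel_trans hA haB.2 (Or.inl (Relation.ReflTransGen.single hw))⟩
  · intro hab
    obtain ⟨ha, hb, hlt⟩ := hA.1 _ hab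
    refine ⟨hlt, cls A t a, mem_parts_ofSys.2 ⟨a, ha, rfl⟩,
      mem_cls.2 ⟨ha, rel_refl⟩,
      mem_cls.2 ⟨hb, Or.inl (Relation.ReflTransGen.single hab)⟩, ?_⟩
    intro w hw ⟨haw, hwb⟩
    rw [mem_cls] at hw
    rcases hw.2 with h | h
    · rcases h.cases_head with rfl | ⟨w', hw', hrest'⟩
      · omega
      · have : ((a : ℕ), w') = (a, b) := hA.2.1 _ hw' _ hab rfl
        cases this
        exact absurd (reach_le hA hrest') (by omega)
    · exact absurd (reach_le hA h) (by omega)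

section Part2

variable {t : Finset ℕ} {a b x y : ℕ}

/-- The arc set of a partition. -/
noncomputable def arcs (π : Finpartition t) : Finset (ℕ × ℕ) :=
  @Finset.filter _ (fun p => IsArc π p.1 p.2) (Classical.decPred _) (t ×ˢ t)

lemma mem_arcs {π : Finpartition t} : (a, b) ∈ arcs π ↔ IsArc π a b := by
  simp only [arcs, Finset.mem_filter, Finset.mem_product]
  refine ⟨fun h => h.2, fun h => ⟨?_, h⟩⟩
  obtain ⟨_, B, hB, haB, hbB, _⟩ := h
  exact ⟨π.le hB haB, π.le hB hbB⟩

lemma isArc_unique_right {π : Finpartition t} (h1 : IsArc π a b) (h2 : IsArc π a y) : b = y := by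
  obtain ⟨hab, B, hB, haB, hbB, hbtw⟩ := h1
  obtain ⟨hay, C, hC, haC, hyC, hbtw'⟩ := h2
  cases π.eq_of_mem_parts hB hC haB haC
  by_contra hne
  rcases lt_or_gt_of_ne hne with h | h
  · exact hbtw' b hbB ⟨hab, h⟩
  · exact hbtw y hyC ⟨hay, h⟩

lemma isArc_unique_left {π : Finpartition t} (h1 : IsArc π a b) (h2 : IsArc π x b) : a = x := by
  obtain ⟨hab, B, hB, haB, hbB, hbtw⟩ := h1
  obtain ⟨hxb, C, hC, hxC, hbC, hbtw'⟩ := h2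
  cases π.eq_of_mem_parts hB hC hbB hbC
  by_contra hne
  rcases lt_or_gt_of_ne hne with h | h
  · exact hbtw x hxC ⟨h, hxb⟩
  · exact hbtw' a haB ⟨h, hab⟩

lemma sysOk_arcs (π : Finpartition t) : SysOk t (arcs π) := by
  refine ⟨?_, ?_, ?_⟩
  · rintro ⟨a, b⟩ hp
    rw [mem_arcs] at hp
    obtain ⟨hab, B, hB, haB, hbB, _⟩ := hp
    exact ⟨π.le hB haB, π.le hB hbB, hab⟩
  · rintro ⟨a, b⟩ hp ⟨a', b'⟩ hq h
    dsimp at h; subst h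
    rw [mem_arcs] at hp hq
    have := isArc_unique_right hp hq
    simp [this]
  · rintro ⟨a, b⟩ hp ⟨a', b'⟩ hq h
    dsimp at h; subst h
    rw [mem_arcs] at hp hq
    have := isArc_unique_left hp hq
    simp [this]

/-- Within a block, the smaller element reaches the larger via arcs. -/
lemma reach_arcs_of_mem_block {π : Finpartition t} {B : Finset ℕ} (hB : B ∈ π.parts) :
    ∀ d x y, y - x = d → x ∈ B → y ∈ B → x ≤ y → Reach (arcs π) x y := by
  intro d
  induction d using Nat.strong_induction_on with
  | _ d ih =>
    intro x y hd hx hy hxy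
    rcases eq_or_lt_of_le hxy with rfl | hlt
    · exact Relation.ReflTransGen.refl
    · have hCne : (B.filter (fun w => x < w)).Nonempty := ⟨y, Finset.mem_filter.2 ⟨hy, hlt⟩⟩
      set z := (B.filter (fun w => x < w)).min' hCne with hz
      have hzmem : z ∈ B.filter (fun w => x < w) := Finset.min'_mem _ _
      rw [Finset.mem_filter] at hzmem
      have harc : IsArc π x z := by
        refine ⟨hzmem.2, B, hB, hx, hzmem.1, ?_⟩
        intro w hw ⟨h1, h2⟩
        have : z ≤ w := Finset.min'_le _ _ (Finset.mem_filter.2 ⟨hw, h1⟩)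
        omega
      have hzy : z ≤ y := Finset.min'_le _ _ (Finset.mem_filter.2 ⟨hy, hlt⟩)
      have hstep : Step (arcs π) x z := mem_arcs.2 harc
      exact Relation.ReflTransGen.head hstep
        (ih (y - z) (by omega) z y rfl hzmem.1 hy hzy)

lemma sameBlock_of_rel {π : Finpartition t} (h : Rel (arcs π) x y) :
    x = y ∨ ∃ B ∈ π.parts, x ∈ B ∧ y ∈ B := by
  have key : ∀ u v, Reach (arcs π) u v → u = v ∨ ∃ B ∈ π.parts, u ∈ B ∧ v ∈ B := by
    intro u v h
    induction h with
    | refl => exact Or.inl rfl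
    | tail hr hstep ih =>
      rename_i c d
      rw [Step, mem_arcs] at hstep
      obtain ⟨_, C, hC, hcC, hdC, _⟩ := hstep
      rcases ih with rfl | ⟨B, hB, huB, hcB⟩
      · exact Or.inr ⟨C, hC, hcC, hdC⟩
      · have hBC := π.eq_of_mem_parts hB hC hcB hcC
        subst hBC
        exact Or.inr ⟨B, hB, huB, hdC⟩
  rcases h with h | h
  · exact key _ _ h
  · rcases key _ _ h with rfl | ⟨B, hB, h1, h2⟩
    · exact Or.inl rfl
    · exact Or.inr ⟨B, hB, h2, h1⟩

lemma rel_iff_sameBlock {π : Finpartition t} {B : Finset ℕ} (hB : B ∈ π.parts) (hx : x ∈ B) :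
    Rel (arcs π) x y ↔ y ∈ B := by
  constructor
  · intro h
    rcases sameBlock_of_rel h with rfl | ⟨C, hC, hxC, hyC⟩
    · exact hx
    · cases π.eq_of_mem_parts hB hC hx hxC
      exact hyC
  · intro hy
    rcases le_total x y with h | h
    · exact Or.inl (reach_arcs_of_mem_block hB _ x y rfl hx hy h)
    · exact Or.inr (reach_arcs_of_mem_block hB _ y x rfl hy hx h)

lemma cls_arcs_eq {π : Finpartition t} {B : Finset ℕ} (hB : B ∈ π.parts) (hx : x ∈ B) :
    cls (arcs π) t x = B := by
  ext y
  rw [mem_cls, rel_iff_sameBlock hB hx]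
  exact ⟨fun h => h.2, fun h => ⟨π.le hB h, h⟩⟩

lemma ofSys_arcs (π : Finpartition t) : ofSys t (arcs π) (sysOk_arcs π) = π := by
  apply Finpartition.ext
  ext B
  rw [mem_parts_ofSys]
  constructor
  · rintro ⟨x, hx, rfl⟩
    obtain ⟨C, hC, hxC⟩ := π.exists_mem hx
    rw [cls_arcs_eq hC hxC]
    exact hC
  · intro hB
    obtain ⟨x, hx⟩ := π.nonempty_of_mem_parts hB
    exact ⟨x, π.le hB hx, cls_arcs_eq hB hx⟩

lemma arcs_ofSys {A : Finset (ℕ × ℕ)} (hA : SysOk t A) : arcs (ofSys t A hA) = A := by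
  ext ⟨a, b⟩
  rw [mem_arcs, isArc_ofSys]

/-- Classical arc systems on `t`, bundled. -/
def SysC (t : Finset ℕ) := {A : Finset (ℕ × ℕ) // SysOk t A}

/-- The core equivalence between partitions of `t` and arc systems on `t`. -/
noncomputable def sysEquiv (t : Finset ℕ) : Finpartition t ≃ SysC t where
  toFun π := ⟨arcs π, sysOk_arcs π⟩
  invFun A := ofSys t A.1 A.2
  left_inv π := ofSys_arcs π
  right_inv A := Subtype.ext (arcs_ofSys A.2)

end Part2

section Part3

variable {n : ℕ} {S : Finset ℕ} {a b x y u : ℕ}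

def ESysOk (n : ℕ) (E : Finset (ℕ × ℕ)) : Prop :=
  (∀ p ∈ E, p.1 ∈ Finset.Icc 1 n ∧ p.2 ∈ Finset.Icc 1 n ∧ p.1 ≤ p.2) ∧
  (∀ p ∈ E, ∀ q ∈ E, p.1 = q.1 → p = q) ∧
  (∀ p ∈ E, ∀ q ∈ E, p.2 = q.2 → p = q)

def SysE (n : ℕ) := {E : Finset (ℕ × ℕ) // ESysOk n E}

/-- The enhanced arc set of a partition. -/
noncomputable def earcs (π : Finpartition S) : Finset (ℕ × ℕ) :=
  @Finset.filter _ (fun p => IsEArc π p.1 p.2) (Classical.decPred _) (S ×ˢ S)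

lemma isEArc_mem_left {π : Finpartition S} (h : IsEArc π a b) : a ∈ S := by
  rcases h with ⟨_, B, hB, haB, _, _⟩ | ⟨rfl, hs⟩
  · exact π.le hB haB
  · exact π.le hs (Finset.mem_singleton_self a)

lemma isEArc_mem_right {π : Finpartition S} (h : IsEArc π a b) : b ∈ S := by
  rcases h with ⟨_, B, hB, _, hbB, _⟩ | ⟨rfl, hs⟩
  · exact π.le hB hbB
  · exact π.le hs (Finset.mem_singleton_self a)

lemma mem_earcs {π : Finpartition S} : (a, b) ∈ earcs π ↔ IsEArc π a b := by
  simp only [earcs, Finset.mem_filter, Finset.mem_product]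
  exact ⟨fun h => h.2, fun h => ⟨⟨isEArc_mem_left h, isEArc_mem_right h⟩, h⟩⟩

lemma isEArc_le {π : Finpartition S} (h : IsEArc π a b) : a ≤ b := by
  rcases h with ⟨hab, _⟩ | ⟨rfl, _⟩
  · exact hab.le
  · exact le_rfl

lemma isEArc_unique_right {π : Finpartition S} (h1 : IsEArc π a b) (h2 : IsEArc π a y) :
    b = y := by
  rcases h1 with h1 | ⟨heq1, hs1⟩ <;> rcases h2 with h2 | ⟨heq2, hs2⟩
  · exact isArc_unique_right h1 h2
  · obtain ⟨hab, B, hB, haB, hbB, _⟩ := h1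
    have hBa := π.eq_of_mem_parts hB hs2 haB (Finset.mem_singleton_self a)
    rw [hBa, Finset.mem_singleton] at hbB
    omega
  · obtain ⟨hay, B, hB, haB, hyB, _⟩ := h2
    have hBa := π.eq_of_mem_parts hB hs1 haB (Finset.mem_singleton_self a)
    rw [hBa, Finset.mem_singleton] at hyB
    omega
  · omega

lemma isEArc_unique_left {π : Finpartition S} (h1 : IsEArc π a b) (h2 : IsEArc π x b) :
    a = x := by
  rcases h1 with h1 | ⟨heq1, hs1⟩ <;> rcases h2 with h2 | ⟨heq2, hs2⟩
  · exact isArc_unique_left h1 h2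
  · obtain ⟨hab, B, hB, haB, hbB, _⟩ := h1
    have hbx : b ∈ ({x} : Finset ℕ) := Finset.mem_singleton.2 heq2.symm
    have hBx := π.eq_of_mem_parts hB hs2 hbB hbx
    rw [hBx, Finset.mem_singleton] at haB
    omega
  · obtain ⟨hxb, B, hB, hxB, hbB, _⟩ := h2
    have hba : b ∈ ({a} : Finset ℕ) := Finset.mem_singleton.2 heq1.symm
    have hBa := π.eq_of_mem_parts hB hs1 hbB hba
    rw [hBa, Finset.mem_singleton] at hxB
    omega
  · omega

lemma esysOk_earcs (hS : S ⊆ Finset.Icc 1 n) (π : Finpartition S) : ESysOk n (earcs π) := by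
  refine ⟨?_, ?_, ?_⟩
  · rintro ⟨a, b⟩ hp
    rw [mem_earcs] at hp
    exact ⟨hS (isEArc_mem_left hp), hS (isEArc_mem_right hp), isEArc_le hp⟩
  · rintro ⟨a, b⟩ hp ⟨a', b'⟩ hq h
    dsimp at h; subst h
    rw [mem_earcs] at hp hq
    simp [isEArc_unique_right hp hq]
  · rintro ⟨a, b⟩ hp ⟨a', b'⟩ hq h
    dsimp at h; subst h
    rw [mem_earcs] at hp hq
    simp [isEArc_unique_left hp hq]

/-- Every element of the ground set is an endpoint of some enhanced arc. -/
lemma exists_earc (π : Finpartition S) (hu : u ∈ S) :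
    (∃ w, IsEArc π u w) ∨ (∃ v, IsEArc π v u) := by
  obtain ⟨B, hB, huB⟩ := π.exists_mem hu
  by_cases h1 : ∃ w ∈ B, u < w
  · obtain ⟨w, hw, huw⟩ := h1
    have hCne : (B.filter (fun r => u < r)).Nonempty := ⟨w, Finset.mem_filter.2 ⟨hw, huw⟩⟩
    set z := (B.filter (fun r => u < r)).min' hCne with hz
    have hzmem := Finset.min'_mem _ hCne
    rw [Finset.mem_filter] at hzmem
    refine Or.inl ⟨z, Or.inl ⟨hzmem.2, B, hB, huB, hzmem.1, ?_⟩⟩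
    intro w' hw' ⟨ha, hb⟩
    have : z ≤ w' := Finset.min'_le _ _ (Finset.mem_filter.2 ⟨hw', ha⟩)
    omega
  · by_cases h2 : ∃ v ∈ B, v < u
    · obtain ⟨v, hv, hvu⟩ := h2
      have hCne : (B.filter (fun r => r < u)).Nonempty := ⟨v, Finset.mem_filter.2 ⟨hv, hvu⟩⟩
      set z := (B.filter (fun r => r < u)).max' hCne with hz
      have hzmem := Finset.max'_mem _ hCne
      rw [Finset.mem_filter] at hzmem
      refine Or.inr ⟨z, Or.inl ⟨hzmem.2, B, hB, hzmem.1, huB, ?_⟩⟩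
      intro w' hw' ⟨ha, hb⟩
      have hwmem : w' ∈ B.filter (fun r => r < u) := Finset.mem_filter.2 ⟨hw', hb⟩
      have : w' ≤ z := Finset.le_max' _ _ hwmem
      omega
    · have hBu : B = {u} := by
        apply Finset.eq_singleton_iff_unique_mem.2
        refine ⟨huB, fun w hw => ?_⟩
        push_neg at h1 h2
        have := h1 w hw
        have := h2 w hw
        omega
      exact Or.inl ⟨u, Or.inr ⟨rfl, hBu ▸ hB⟩⟩

def baseSet (E : Finset (ℕ × ℕ)) : Finset ℕ := E.image Prod.fst ∪ E.image Prod.snd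

lemma baseSet_subset {E : Finset (ℕ × ℕ)} (hE : ESysOk n E) : baseSet E ⊆ Finset.Icc 1 n := by
  intro u hu
  rcases Finset.mem_union.1 hu with h | h <;> obtain ⟨p, hp, rfl⟩ := Finset.mem_image.1 h
  · exact (hE.1 p hp).1
  · exact (hE.1 p hp).2.1

def strictPart (E : Finset (ℕ × ℕ)) : Finset (ℕ × ℕ) := E.filter (fun p => p.1 < p.2)

lemma strictPart_subset {E : Finset (ℕ × ℕ)} : strictPart E ⊆ E := Finset.filter_subset _ _

lemma mem_strictPart {E : Finset (ℕ × ℕ)} {p : ℕ × ℕ} :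
    p ∈ strictPart E ↔ p ∈ E ∧ p.1 < p.2 := Finset.mem_filter

lemma sysOk_strictPart {E : Finset (ℕ × ℕ)} (hE : ESysOk n E) :
    SysOk (baseSet E) (strictPart E) := by
  refine ⟨?_, ?_, ?_⟩
  · intro p hp
    rw [mem_strictPart] at hp
    refine ⟨Finset.mem_union_left _ (Finset.mem_image_of_mem _ hp.1),
      Finset.mem_union_right _ (Finset.mem_image_of_mem _ hp.1), hp.2⟩
  · intro p hp q hq h
    exact hE.2.1 p (strictPart_subset hp) q (strictPart_subset hq) h
  · intro p hp q hq h
    exact hE.2.2 p (strictPart_subset hp) q (strictPart_subset hq) h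

noncomputable def ofESys (E : Finset (ℕ × ℕ)) (hE : ESysOk n E) : Finpartition (baseSet E) :=
  ofSys (baseSet E) (strictPart E) (sysOk_strictPart hE)

lemma no_strict_arc_of_diag {E : Finset (ℕ × ℕ)} (hE : ESysOk n E) (huu : (u, u) ∈ E) :
    (∀ w, (u, w) ∉ strictPart E) ∧ (∀ v, (v, u) ∉ strictPart E) := by
  constructor
  · intro w hw
    rw [mem_strictPart] at hw
    have := hE.2.1 _ hw.1 _ huu rfl
    rw [Prod.mk.injEq] at this
    omega
  · intro v hv
    rw [mem_strictPart] at hv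
    have := hE.2.2 _ hv.1 _ huu rfl
    rw [Prod.mk.injEq] at this
    omega

lemma singleton_mem_ofESys {E : Finset (ℕ × ℕ)} (hE : ESysOk n E) :
    {u} ∈ (ofESys E hE).parts ↔ (u, u) ∈ E := by
  rw [ofESys, mem_parts_ofSys]
  constructor
  · rintro ⟨x, hx, hcls⟩
    have hxmem : x ∈ cls (strictPart E) (baseSet E) x := mem_cls.2 ⟨hx, rel_refl⟩
    rw [hcls, Finset.mem_singleton] at hxmem
    subst hxmem
    rcases Finset.mem_union.1 hx with h | h <;>
      obtain ⟨⟨p1, p2⟩, hp, hpe⟩ := Finset.mem_image.1 h <;> dsimp at hpe <;> subst hpe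
    · rcases eq_or_lt_of_le (hE.1 _ hp).2.2 with heq | hlt
      · dsimp at heq
        rwa [show p2 = p1 from heq.symm] at hp
      · exfalso
        have hstep : Step (strictPart E) p1 p2 := mem_strictPart.2 ⟨hp, hlt⟩
        have hmem : p2 ∈ cls (strictPart E) (baseSet E) p1 :=
          mem_cls.2 ⟨((sysOk_strictPart hE).1 _ hstep).2.1,
            Or.inl (Relation.ReflTransGen.single hstep)⟩
        rw [hcls, Finset.mem_singleton] at hmem
        omega
    · rcases eq_or_lt_of_le (hE.1 _ hp).2.2 with heq | hlt
      · dsimp at heq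
        rwa [show p1 = p2 from heq] at hp
      · exfalso
        have hstep : Step (strictPart E) p1 p2 := mem_strictPart.2 ⟨hp, hlt⟩
        have hmem : p1 ∈ cls (strictPart E) (baseSet E) p2 :=
          mem_cls.2 ⟨((sysOk_strictPart hE).1 _ hstep).1,
            Or.inr (Relation.ReflTransGen.single hstep)⟩
        rw [hcls, Finset.mem_singleton] at hmem
        omega
  · intro huu
    have hu : u ∈ baseSet E :=
      Finset.mem_union_left _ (Finset.mem_image_of_mem _ huu)
    refine ⟨u, hu, ?_⟩
    have hiso := no_strict_arc_of_diag hE huu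
    ext z
    rw [mem_cls, Finset.mem_singleton]
    constructor
    · rintro ⟨hz, hr | hr⟩
      · rcases hr.cases_head with h | ⟨w, hw, _⟩
        · omega
        · exact absurd hw (hiso.1 w)
      · rcases hr.cases_tail with h | ⟨w, _, hw⟩
        · omega
        · exact absurd hw (hiso.2 w)
    · rintro rfl
      exact ⟨hu, rel_refl⟩

lemma isEArc_ofESys {E : Finset (ℕ × ℕ)} (hE : ESysOk n E) :
    IsEArc (ofESys E hE) x y ↔ (x, y) ∈ E := by
  constructor
  · rintro (h | ⟨rfl, hs⟩)
    · rw [ofESys, isArc_ofSys] at h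
      exact strictPart_subset h
    · exact (singleton_mem_ofESys hE).1 hs
  · intro hxy
    rcases eq_or_lt_of_le (hE.1 _ hxy).2.2 with heq | hlt
    · dsimp at heq; subst heq
      exact Or.inr ⟨rfl, (singleton_mem_ofESys hE).2 hxy⟩
    · exact Or.inl ((isArc_ofSys _).2 (mem_strictPart.2 ⟨hxy, hlt⟩))

lemma baseSet_earcs (π : Finpartition S) : baseSet (earcs π) = S := by
  ext u
  constructor
  · intro hu
    rcases Finset.mem_union.1 hu with h | h <;>
      obtain ⟨⟨p1, p2⟩, hp, hpe⟩ := Finset.mem_image.1 h <;> dsimp at hpe <;> subst hpe <;>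
      rw [mem_earcs] at hp
    · exact isEArc_mem_left hp
    · exact isEArc_mem_right hp
  · intro hu
    rcases exists_earc π hu with ⟨w, hw⟩ | ⟨v, hv⟩
    · exact Finset.mem_union_left _ (Finset.mem_image.2 ⟨(u, w), mem_earcs.2 hw, rfl⟩)
    · exact Finset.mem_union_right _ (Finset.mem_image.2 ⟨(v, u), mem_earcs.2 hv, rfl⟩)

lemma finpartition_eq_of_isArc {π₁ π₂ : Finpartition S}
    (h : ∀ a b, IsArc π₁ a b ↔ IsArc π₂ a b) : π₁ = π₂ := by
  have harcs : arcs π₁ = arcs π₂ := by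
    ext ⟨a, b⟩
    rw [mem_arcs, mem_arcs]
    exact h a b
  exact (sysEquiv S).injective (Subtype.ext harcs)

lemma finpartition_heq {S T : Finset ℕ} (h : S = T) {π₁ : Finpartition S} {π₂ : Finpartition T}
    (h2 : ∀ a b, IsArc π₁ a b ↔ IsArc π₂ a b) : HEq π₁ π₂ := by
  subst h
  exact heq_of_eq (finpartition_eq_of_isArc h2)

/-- The sigma-side equivalence. -/
noncomputable def sigmaEquiv (n : ℕ) :
    (Σ S : {S : Finset ℕ // S ⊆ Finset.Icc 1 n}, Finpartition S.val) ≃ SysE n where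
  toFun x := ⟨earcs x.2, esysOk_earcs x.1.2 x.2⟩
  invFun E := ⟨⟨baseSet E.1, baseSet_subset E.2⟩, ofESys E.1 E.2⟩
  left_inv := by
    rintro ⟨⟨S, hS⟩, π⟩
    refine Sigma.ext (Subtype.ext (baseSet_earcs π)) ?_
    refine finpartition_heq (baseSet_earcs π) ?_
    intro a b
    constructor
    · intro h
      have he : IsEArc (ofESys (earcs π) (esysOk_earcs hS π)) a b := Or.inl h
      rw [isEArc_ofESys, mem_earcs] at he
      rcases he with h' | ⟨heq, _⟩
      · exact h'
      · exact absurd h.1 (by omega)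
    · intro h
      have he : IsEArc (ofESys (earcs π) (esysOk_earcs hS π)) a b := by
        rw [isEArc_ofESys, mem_earcs]
        exact Or.inl h
      rcases he with h' | ⟨heq, _⟩
      · exact h'
      · exact absurd h.1 (by omega)
  right_inv := by
    rintro ⟨E, hE⟩
    apply Subtype.ext
    dsimp
    ext ⟨a, b⟩
    rw [mem_earcs, isEArc_ofESys]

end Part3

section Part4

variable {n k : ℕ}

def crossC (A : Finset (ℕ × ℕ)) (k : ℕ) : Prop :=
  ∃ a b : Fin k → ℕ, StrictMono a ∧ StrictMono b ∧
    (∀ i j, a i < b j) ∧ ∀ i, (a i, b i) ∈ A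

def crossE (E : Finset (ℕ × ℕ)) (k : ℕ) : Prop :=
  ∃ a b : Fin k → ℕ, StrictMono a ∧ StrictMono b ∧
    (∀ i j, a i ≤ b j) ∧ ∀ i, (a i, b i) ∈ E

lemma clCross_iff {t : Finset ℕ} (σ : Finpartition t) :
    ClCross σ k ↔ crossC (arcs σ) k := by
  constructor
  · rintro ⟨a, b, ha, hb, hle, harc⟩
    exact ⟨a, b, ha, hb, hle, fun i => mem_arcs.2 (harc i)⟩
  · rintro ⟨a, b, ha, hb, hle, harc⟩
    exact ⟨a, b, ha, hb, hle, fun i => mem_arcs.1 (harc i)⟩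

lemma enhCross_iff {S : Finset ℕ} (π : Finpartition S) :
    EnhCross π k ↔ crossE (earcs π) k := by
  constructor
  · rintro ⟨a, b, ha, hb, hle, harc⟩
    exact ⟨a, b, ha, hb, hle, fun i => mem_earcs.2 (harc i)⟩
  · rintro ⟨a, b, ha, hb, hle, harc⟩
    exact ⟨a, b, ha, hb, hle, fun i => mem_earcs.1 (harc i)⟩

/-- The shift `(a, b) ↦ (a, b + 1)` as an equivalence of arc systems. -/
noncomputable def shiftSys (n : ℕ) : SysE n ≃ SysC (Finset.Icc 1 (n + 1)) where
  toFun E := ⟨E.1.image (fun p => (p.1, p.2 + 1)), by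
    obtain ⟨E, hE⟩ := E
    refine ⟨?_, ?_, ?_⟩
    · intro q hq
      obtain ⟨p, hp, rfl⟩ := Finset.mem_image.1 hq
      obtain ⟨h1, h2, h3⟩ := hE.1 p hp
      rw [Finset.mem_Icc] at h1 h2 ⊢
      rw [Finset.mem_Icc]
      exact ⟨⟨h1.1, by omega⟩, ⟨by omega, by omega⟩, by omega⟩
    · intro q hq q' hq' h
      obtain ⟨p, hp, rfl⟩ := Finset.mem_image.1 hq
      obtain ⟨p', hp', rfl⟩ := Finset.mem_image.1 hq'
      dsimp at h
      have := hE.2.1 p hp p' hp' h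
      rw [this]
    · intro q hq q' hq' h
      obtain ⟨p, hp, rfl⟩ := Finset.mem_image.1 hq
      obtain ⟨p', hp', rfl⟩ := Finset.mem_image.1 hq'
      dsimp at h
      have := hE.2.2 p hp p' hp' (by omega)
      rw [this]⟩
  invFun A := ⟨A.1.image (fun p => (p.1, p.2 - 1)), by
    obtain ⟨A, hA⟩ := A
    refine ⟨?_, ?_, ?_⟩
    · intro q hq
      obtain ⟨p, hp, rfl⟩ := Finset.mem_image.1 hq
      obtain ⟨h1, h2, h3⟩ := hA.1 p hp
      rw [Finset.mem_Icc] at h1 h2 ⊢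
      rw [Finset.mem_Icc]
      exact ⟨⟨h1.1, by omega⟩, ⟨by omega, by omega⟩, by omega⟩
    · intro q hq q' hq' h
      obtain ⟨p, hp, rfl⟩ := Finset.mem_image.1 hq
      obtain ⟨p', hp', rfl⟩ := Finset.mem_image.1 hq'
      dsimp at h
      have := hA.2.1 p hp p' hp' h
      rw [this]
    · intro q hq q' hq' h
      obtain ⟨p, hp, rfl⟩ := Finset.mem_image.1 hq
      obtain ⟨p', hp', rfl⟩ := Finset.mem_image.1 hq'
      dsimp at h
      obtain ⟨h1, h2, h3⟩ := hA.1 p hp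
      obtain ⟨h1', h2', h3'⟩ := hA.1 p' hp'
      rw [Finset.mem_Icc] at h1 h2 h1' h2'
      have := hA.2.2 p hp p' hp' (by omega)
      rw [this]⟩
  left_inv := by
    rintro ⟨E, hE⟩
    apply Subtype.ext
    dsimp only
    rw [Finset.image_image]
    have heq : Set.EqOn ((fun p : ℕ × ℕ => (p.1, p.2 - 1)) ∘ fun p : ℕ × ℕ => (p.1, p.2 + 1))
        id ↑E := by
      intro p _
      simp [Function.comp]
    rw [Finset.image_congr heq, Finset.image_id]
  right_inv := by
    rintro ⟨A, hA⟩
    apply Subtype.ext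
    dsimp only
    rw [Finset.image_image]
    have heq : Set.EqOn ((fun p : ℕ × ℕ => (p.1, p.2 + 1)) ∘ fun p : ℕ × ℕ => (p.1, p.2 - 1))
        id ↑A := by
      intro p hp
      rw [Finset.mem_coe] at hp
      obtain ⟨h1, h2, h3⟩ := hA.1 p hp
      rw [Finset.mem_Icc] at h1 h2
      simp only [Function.comp, id]
      have : p.2 - 1 + 1 = p.2 := by omega
      rw [this]
    rw [Finset.image_congr heq, Finset.image_id]

lemma crossE_iff_shift (E : SysE n) :
    crossE E.1 k ↔ crossC ((shiftSys n) E).1 k := by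
  obtain ⟨E, hE⟩ := E
  constructor
  · rintro ⟨a, b, ha, hb, hle, hmem⟩
    refine ⟨a, fun i => b i + 1, ha, fun i j hij => by dsimp only; have := hb hij; omega,
      fun i j => by dsimp only; have := hle i j; omega, fun i => ?_⟩
    exact Finset.mem_image.2 ⟨(a i, b i), hmem i, rfl⟩
  · rintro ⟨a, b, ha, hb, hlt, hmem⟩
    have key : ∀ i, (a i, b i - 1) ∈ E ∧ 1 ≤ b i := by
      intro i
      obtain ⟨⟨p1, p2⟩, hp, hpe⟩ := Finset.mem_image.1 (hmem i)
      rw [Prod.mk.injEq] at hpe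
      obtain ⟨he1, he2⟩ := hpe
      refine ⟨?_, by omega⟩
      have : b i - 1 = p2 := by omega
      rw [this, ← he1]
      exact hp
    refine ⟨a, fun i => b i - 1, ha, fun i j hij => by
        dsimp only
        have := hb hij
        have h1 := (key i).2
        omega,
      fun i j => by
        dsimp only
        have := hlt i j
        have h1 := (key j).2
        omega,
      fun i => (key i).1⟩

/-- Sigma of subtypes versus subtype of sigma. -/
def sigmaSubtypeEquiv {α : Type*} {β : α → Type*} (p : ∀ a, β a → Prop) :
    (Σ a, {b : β a // p a b}) ≃ {x : Σ a, β a // p x.1 x.2} where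
  toFun x := ⟨⟨x.1, x.2.1⟩, x.2.2⟩
  invFun x := ⟨x.1.1, x.1.2, x.2⟩
  left_inv := by rintro ⟨a, b, h⟩; rfl
  right_inv := by rintro ⟨⟨a, b⟩, h⟩; rfl

end Part4

end Stmt8
theorem stmt8 (n k : ℕ) (hk : 1 ≤ k) :
    Nonempty ((Σ S : {S : Finset ℕ // S ⊆ Finset.Icc 1 n},
        {π : Finpartition S.val // ¬ EnhCross π k}) ≃
      {σ : Finpartition (Finset.Icc 1 (n+1)) // ¬ ClCross σ k}) := by
  have e1 := Stmt8.sigmaSubtypeEquiv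
    (fun (S : {S : Finset ℕ // S ⊆ Finset.Icc 1 n}) (π : Finpartition S.val) => ¬ EnhCross π k)
  have e2 : {x : Σ S : {S : Finset ℕ // S ⊆ Finset.Icc 1 n}, Finpartition S.val //
        ¬ EnhCross x.2 k} ≃ {E : Stmt8.SysE n // ¬ Stmt8.crossE E.1 k} :=
    Equiv.subtypeEquiv (Stmt8.sigmaEquiv n)
      (by rintro ⟨S, π⟩; exact not_congr (Stmt8.enhCross_iff π))
  have e3 : {E : Stmt8.SysE n // ¬ Stmt8.crossE E.1 k} ≃
      {A : Stmt8.SysC (Finset.Icc 1 (n+1)) // ¬ Stmt8.crossC A.1 k} :=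
    Equiv.subtypeEquiv (Stmt8.shiftSys n) (fun E => not_congr (Stmt8.crossE_iff_shift E))
  have e4 : {A : Stmt8.SysC (Finset.Icc 1 (n+1)) // ¬ Stmt8.crossC A.1 k} ≃
      {σ : Finpartition (Finset.Icc 1 (n+1)) // ¬ ClCross σ k} :=
    Equiv.subtypeEquiv (Stmt8.sysEquiv (Finset.Icc 1 (n+1))).symm (by
      intro A
      apply not_congr
      have harc : Stmt8.arcs ((Stmt8.sysEquiv (Finset.Icc 1 (n+1))).symm A) = A.1 :=
        Stmt8.arcs_ofSys A.2
      rw [Stmt8.clCross_iff, harc])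
  exact ⟨((e1.trans e2).trans e3).trans e4⟩
end
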